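/- arXiv:2301.03120 — 4 statements merged into one kernel-verified Lean document; each statement's English description precedes it below -/
import Mathlib

section
/- Let W be the code space of a quantum maximum distance separable (QMDS) code ((n, K, d))_D, i.e., W is a K-dimensional (d−1)-uniform subspace of (C^D)^{⊗n} with K = D^{n−2(d−1)}, and let P = Σ_{s=1}^{K} |ψ_s⟩⟨ψ_s| be the orthogonal projector onto W, where {ψ_s} is an orthonormal basis of W. Then for every subset T ⊆ {1,...,n} with |T| = n−(d−1), the partial trace of P over the parties in T^c is proportional to the identity: Tr_{T^c}[P] = (K/D^{n−(d−1)}) · I_T = D^{−(d−1)} · I_T, where I_T is the identity on (C^D)^{⊗(n−d+1)}. -/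
/-!
Common definitions: multipartite systems with parties indexed by a finite type `ι`,
local dimensions `d : ι → ℕ`, vectors as functions on the configuration space,
partial traces, and `r`-uniform states and subspaces.
-/

open scoped ComplexConjugate Matrix

namespace RUnif

variable {ι : Type} [Fintype ι] [DecidableEq ι]

/-- Configuration space (computational basis index set) of the multipartite system
`ℂ^{d i₁} ⊗ ... ⊗ ℂ^{d iₙ}`. -/
abbrev Cfg (d : ι → ℕ) : Type := ∀ i, Fin (d i)

/-- The multipartite Hilbert space `ℂ^{d i₁} ⊗ ... ⊗ ℂ^{d iₙ}`, realized as functions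
on the configuration space. -/
abbrev H (d : ι → ℕ) : Type := Cfg d → ℂ

/-- The standard hermitian inner product `⟪φ, ψ⟫`. -/
noncomputable def dotc (d : ι → ℕ) (φ ψ : H d) : ℂ :=
  ∑ x, conj (φ x) * ψ x

/-- The rank-one operator `|ψ⟩⟨φ|` as a matrix. -/
noncomputable def dyad (d : ι → ℕ) (ψ φ : H d) : Matrix (Cfg d) (Cfg d) ℂ :=
  Matrix.of fun x y => ψ x * conj (φ y)

/-- Configurations of the parties inside `S`. -/
abbrev SubCfg (d : ι → ℕ) (S : Finset ι) : Type := ∀ i : S, Fin (d i.1)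

/-- Configurations of the parties outside `S`. -/
abbrev CoCfg (d : ι → ℕ) (S : Finset ι) : Type := ∀ i : {j : ι // j ∉ S}, Fin (d i.1)

/-- Merge a configuration of the parties in `S` with one of the parties outside `S`. -/
def merge (d : ι → ℕ) (S : Finset ι) (a : SubCfg d S) (c : CoCfg d S) : Cfg d :=
  fun i => if h : i ∈ S then a ⟨i, h⟩ else c ⟨i, h⟩

/-- Partial trace over the parties *outside* `S` (i.e. `Tr_{Sᶜ}`), leaving an operator
on the parties in `S`. -/
noncomputable def ptr (d : ι → ℕ) (S : Finset ι) (M : Matrix (Cfg d) (Cfg d) ℂ) :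
    Matrix (SubCfg d S) (SubCfg d S) ℂ :=
  Matrix.of fun a b => ∑ c : CoCfg d S, M (merge d S a c) (merge d S b c)

/-- The maximally mixed state `(1/d_S) I_S` on the parties in `S`. -/
noncomputable def unifMix (d : ι → ℕ) (S : Finset ι) :
    Matrix (SubCfg d S) (SubCfg d S) ℂ :=
  (∏ i : S, (d i.1 : ℂ))⁻¹ • 1

/-- `ψ` is a unit vector. -/
def IsUnitVec (d : ι → ℕ) (ψ : H d) : Prop := dotc d ψ ψ = 1

/-- `ψ` is `r`-uniform: every reduction to `r` parties is maximally mixed. -/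
def IsUniform (d : ι → ℕ) (r : ℕ) (ψ : H d) : Prop :=
  ∀ S : Finset ι, S.card = r → ptr d S (dyad d ψ ψ) = unifMix d S

/-- A subspace is `r`-uniform if every unit vector in it is an `r`-uniform state. -/
def IsUniformSubspace (d : ι → ℕ) (r : ℕ) (W : Submodule ℂ (H d)) : Prop :=
  ∀ ψ ∈ W, IsUnitVec d ψ → IsUniform d r ψ

end RUnif


namespace RUnif

set_option linter.unusedSectionVars false

variable {ι : Type} [Fintype ι] [DecidableEq ι]

lemma dotc_expand (d : ι → ℕ) (a b : ℂ) (x y : H d) :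
    dotc d (a • x + b • y) (a • x + b • y) =
      conj a * a * dotc d x x + conj a * b * dotc d x y
        + conj b * a * dotc d y x + conj b * b * dotc d y y := by
  simp only [dotc, Finset.mul_sum, ← Finset.sum_add_distrib]
  refine Finset.sum_congr rfl fun z _ => ?_
  simp only [Pi.add_apply, Pi.smul_apply, smul_eq_mul, map_add, map_mul]
  ring

lemma dyad_expand (d : ι → ℕ) (a b : ℂ) (x y : H d) :
    dyad d (a • x + b • y) (a • x + b • y) =
      (a * conj a) • dyad d x x + (a * conj b) • dyad d x y
        + (b * conj a) • dyad d y x + (b * conj b) • dyad d y y := by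
  ext u v
  simp only [dyad, Matrix.add_apply, Matrix.smul_apply, Matrix.of_apply, Pi.add_apply,
    Pi.smul_apply, smul_eq_mul, map_add, map_mul]
  ring

lemma ptr_add (d : ι → ℕ) (S : Finset ι) (M N : Matrix (Cfg d) (Cfg d) ℂ) :
    ptr d S (M + N) = ptr d S M + ptr d S N := by
  ext a b; simp [ptr, Finset.sum_add_distrib]

lemma ptr_smul (d : ι → ℕ) (S : Finset ι) (a : ℂ) (M : Matrix (Cfg d) (Cfg d) ℂ) :
    ptr d S (a • M) = a • ptr d S M := by
  ext x y; simp [ptr, Finset.mul_sum]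

lemma ptr_dyad_cross (d : ι → ℕ) (r : ℕ) (W : Submodule ℂ (H d))
    (hW : IsUniformSubspace d r W) {φ χ : H d} (hφW : φ ∈ W) (hχW : χ ∈ W)
    (hφφ : dotc d φ φ = 1) (hχχ : dotc d χ χ = 1)
    (hφχ : dotc d φ χ = 0) (hχφ : dotc d χ φ = 0)
    {S : Finset ι} (hS : S.card = r) :
    ptr d S (dyad d φ χ) = 0 := by
  have hAφ := hW φ hφW hφφ S hS
  have hAχ := hW χ hχW hχχ S hS
  set z : ℂ := Complex.ofReal ((Real.sqrt 2)⁻¹) with hzdef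
  have hz : z * conj z = 2⁻¹ := by
    have h2 : Real.sqrt 2 * Real.sqrt 2 = 2 := Real.mul_self_sqrt (by norm_num)
    rw [hzdef, Complex.conj_ofReal, ← Complex.ofReal_mul, ← mul_inv, h2]
    norm_num
  have hz' : conj z * z = 2⁻¹ := by rw [mul_comm]; exact hz
  have c2 : z * conj (z * Complex.I) = -(2⁻¹ * Complex.I) := by
    rw [map_mul, Complex.conj_I]
    linear_combination (-Complex.I) * hz
  have c3 : (z * Complex.I) * conj z = 2⁻¹ * Complex.I := by
    linear_combination Complex.I * hz
  have c4 : (z * Complex.I) * conj (z * Complex.I) = 2⁻¹ := by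
    rw [map_mul, Complex.conj_I]
    linear_combination (-(z * conj z)) * Complex.I_sq + hz
  have hu1mem : z • φ + z • χ ∈ W := W.add_mem (W.smul_mem _ hφW) (W.smul_mem _ hχW)
  have hu2mem : z • φ + (z * Complex.I) • χ ∈ W :=
    W.add_mem (W.smul_mem _ hφW) (W.smul_mem _ hχW)
  have hu1 : IsUnitVec d (z • φ + z • χ) := by
    unfold IsUnitVec
    rw [dotc_expand, hφφ, hχχ, hφχ, hχφ]
    linear_combination (2 : ℂ) * hz
  have hu2 : IsUnitVec d (z • φ + (z * Complex.I) • χ) := by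
    unfold IsUnitVec
    rw [dotc_expand, hφφ, hχχ, hφχ, hχφ, map_mul, Complex.conj_I]
    linear_combination (1 - Complex.I ^ 2) * hz + (-(2 : ℂ)⁻¹) * Complex.I_sq
  have hP1 := hW _ hu1mem hu1 S hS
  have hP2 := hW _ hu2mem hu2 S hS
  rw [dyad_expand, ptr_add, ptr_add, ptr_add, ptr_smul, ptr_smul, ptr_smul, ptr_smul,
    hAφ, hAχ, hz] at hP1
  rw [dyad_expand, ptr_add, ptr_add, ptr_add, ptr_smul, ptr_smul, ptr_smul, ptr_smul,
    hAφ, hAχ, hz, c2, c3, c4] at hP2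
  ext x y
  have e1 := congrFun (congrFun hP1 x) y
  have e2 := congrFun (congrFun hP2 x) y
  simp only [Matrix.add_apply, Matrix.smul_apply, smul_eq_mul, Matrix.neg_apply,
    neg_mul, neg_smul] at e1 e2
  simp only [Matrix.zero_apply]
  linear_combination e1 + Complex.I * e2 +
    (2⁻¹ * (ptr d S (dyad d φ χ) x y) - 2⁻¹ * (ptr d S (dyad d χ φ) x y)) * Complex.I_sq

def toCC (d : ι → ℕ) (T : Finset ι) (c : CoCfg d T) : SubCfg d Tᶜ :=
  fun i => c ⟨i.1, Finset.mem_compl.mp i.2⟩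

def toAA (d : ι → ℕ) (T : Finset ι) (a : SubCfg d T) : CoCfg d Tᶜ :=
  fun i => a ⟨i.1, Finset.notMem_compl.mp i.2⟩

def eqvA (d : ι → ℕ) (T : Finset ι) : SubCfg d T ≃ CoCfg d Tᶜ where
  toFun := toAA d T
  invFun := fun c i => c ⟨i.1, Finset.notMem_compl.mpr i.2⟩
  left_inv := fun _ => rfl
  right_inv := fun _ => rfl

lemma merge_compl_eq (d : ι → ℕ) (T : Finset ι) (a : SubCfg d T) (c : CoCfg d T) :
    merge d Tᶜ (toCC d T c) (toAA d T a) = merge d T a c := by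
  funext i
  by_cases h : i ∈ T
  · simp [merge, toAA, h, Finset.mem_compl]
  · simp [merge, toCC, h, Finset.mem_compl]

lemma toCC_inj (d : ι → ℕ) (T : Finset ι) {c c' : CoCfg d T}
    (h : toCC d T c = toCC d T c') : c = c' :=
  funext fun i => congrFun h ⟨i.1, Finset.mem_compl.mpr i.2⟩

lemma flip_mul {α β : Type} [Fintype α] [DecidableEq α] [Fintype β] [DecidableEq β]
    (h : Fintype.card β = Fintype.card α) (M : Matrix α β ℂ) (μ : ℂ) (hμ : μ ≠ 0)
    (hMM : Mᴴ * M = μ • 1) : M * Mᴴ = μ • 1 := by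
  let e : α ≃ β := Fintype.equivOfCardEq h.symm
  have key : (M.submatrix id ⇑e)ᴴ * (M.submatrix id ⇑e) = μ • 1 := by
    rw [Matrix.conjTranspose_submatrix]
    have := Matrix.submatrix_mul_equiv Mᴴ M (⇑e) (Equiv.refl α) (⇑e)
    simp only [Equiv.coe_refl] at this
    rw [this, hMM]
    ext i j
    simp [Matrix.submatrix_apply, Matrix.smul_apply, Matrix.one_apply, e.injective.eq_iff]
  have h1 : (μ⁻¹ • (M.submatrix id ⇑e)ᴴ) * (M.submatrix id ⇑e) = 1 := by
    rw [Matrix.smul_mul, key, smul_smul, inv_mul_cancel₀ hμ, one_smul]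
  have h2 := mul_eq_one_comm.mp h1
  rw [Matrix.mul_smul] at h2
  have h3 : (M.submatrix id ⇑e) * (M.submatrix id ⇑e)ᴴ = μ • 1 := by
    rw [← h2, smul_smul, mul_inv_cancel₀ hμ, one_smul]
  rw [Matrix.conjTranspose_submatrix] at h3
  rw [Matrix.submatrix_mul_equiv M Mᴴ id e id] at h3
  rwa [Matrix.submatrix_id_id] at h3

end RUnif

open RUnif in
/-- For a QMDS code `((n, K, δ))_D`, i.e. a `K`-dimensional
`(δ-1)`-uniform subspace `W` of `(ℂ^D)^{⊗n}` with `K = D^{n-2(δ-1)}`, the projector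
`P = Σ_s |ψ_s⟩⟨ψ_s|` onto `W` satisfies, for every set `T` of `n-(δ-1)` parties,
`Tr_{Tᶜ}[P] = D^{-(δ-1)} I_T`. -/
theorem statement6 (n D δ K : ℕ) (hδ : 1 ≤ δ) (hn : 2 * (δ - 1) ≤ n)
    (hQMDS : K = D ^ (n - 2 * (δ - 1)))
    (W : Submodule ℂ (H (fun _ : Fin n => D)))
    (hW : IsUniformSubspace (fun _ : Fin n => D) (δ - 1) W)
    (hdim : Module.finrank ℂ W = K)
    (ψ : Fin K → H (fun _ : Fin n => D)) (hmem : ∀ s, ψ s ∈ W)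
    (hON : ∀ s t, dotc (fun _ : Fin n => D) (ψ s) (ψ t) = if s = t then 1 else 0)
    (hspan : Submodule.span ℂ (Set.range ψ) = W) :
    ∀ T : Finset (Fin n), T.card = n - (δ - 1) →
      ptr (fun _ : Fin n => D) T (∑ s, dyad (fun _ : Fin n => D) (ψ s) (ψ s)) =
        ((D : ℂ) ^ (δ - 1))⁻¹ • 1 := by
  intro T hT
  have hδn : δ - 1 ≤ n := by omega
  have hS : Tᶜ.card = δ - 1 := by
    rw [Finset.card_compl, hT, Fintype.card_fin]; omega
  have hmix : unifMix (fun _ : Fin n => D) Tᶜ = ((D : ℂ) ^ (δ - 1))⁻¹ • 1 := by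
    unfold unifMix
    congr 1
    have h0 : (∏ i : {x // x ∈ Tᶜ}, (((fun _ : Fin n => D) i.1 : ℂ))) = (D : ℂ) ^ (δ - 1) := by
      simp [Finset.prod_const, Finset.card_univ, Fintype.card_coe, hS]
    rw [h0]
  have hcross : ∀ s t : Fin K, ptr (fun _ : Fin n => D) Tᶜ (dyad (fun _ : Fin n => D) (ψ s) (ψ t)) =
      (if s = t then ((D : ℂ) ^ (δ - 1))⁻¹ else 0) • 1 := by
    intro s t
    by_cases hst : s = t
    · subst hst
      rw [if_pos rfl, ← hmix]
      exact hW (ψ s) (hmem s) (by simpa [IsUnitVec] using hON s s) Tᶜ hS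
    · rw [if_neg hst, zero_smul]
      exact ptr_dyad_cross (fun _ : Fin n => D) (δ - 1) W hW (hmem s) (hmem t)
        (by simpa using hON s s) (by simpa using hON t t)
        (by simpa [hst] using hON s t) (by simpa [Ne.symm hst] using hON t s) hS
  have hIP : ∀ (s t : Fin K) (c c' : CoCfg (fun _ : Fin n => D) T),
      (∑ a : SubCfg (fun _ : Fin n => D) T, conj (ψ s (merge (fun _ : Fin n => D) T a c)) * ψ t (merge (fun _ : Fin n => D) T a c'))
        = if (s, c) = (t, c') then ((D : ℂ) ^ (δ - 1))⁻¹ else 0 := by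
    intro s t c c'
    have h1 := congrFun (congrFun (hcross t s) (toCC (fun _ : Fin n => D) T c')) (toCC (fun _ : Fin n => D) T c)
    have hL : ptr (fun _ : Fin n => D) Tᶜ (dyad (fun _ : Fin n => D) (ψ t) (ψ s)) (toCC (fun _ : Fin n => D) T c') (toCC (fun _ : Fin n => D) T c)
        = ∑ a : SubCfg (fun _ : Fin n => D) T, conj (ψ s (merge (fun _ : Fin n => D) T a c)) * ψ t (merge (fun _ : Fin n => D) T a c') := by
      show (∑ c2 : CoCfg (fun _ : Fin n => D) Tᶜ, ψ t (merge (fun _ : Fin n => D) Tᶜ (toCC (fun _ : Fin n => D) T c') c2) *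
          conj (ψ s (merge (fun _ : Fin n => D) Tᶜ (toCC (fun _ : Fin n => D) T c) c2))) = _
      rw [← Equiv.sum_comp (eqvA (fun _ : Fin n => D) T)]
      refine Finset.sum_congr rfl fun a _ => ?_
      rw [show (eqvA (fun _ : Fin n => D) T) a = toAA (fun _ : Fin n => D) T a from rfl, merge_compl_eq, merge_compl_eq, mul_comm]
    rw [hL] at h1
    rw [h1]
    simp only [Matrix.smul_apply, Matrix.one_apply, smul_eq_mul]
    by_cases hst : s = t
    · subst hst
      by_cases hcc : c = c'
      · subst hcc; simp
      · have hne : toCC (fun _ : Fin n => D) T c' ≠ toCC (fun _ : Fin n => D) T c := fun h => hcc ((toCC_inj (fun _ : Fin n => D) T h).symm)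
        simp [hne, hcc]
    · simp [hst, Ne.symm hst]
  set M : Matrix (SubCfg (fun _ : Fin n => D) T) (Fin K × CoCfg (fun _ : Fin n => D) T) ℂ :=
    Matrix.of (fun a p => ψ p.1 (merge (fun _ : Fin n => D) T a p.2)) with hM
  have hMM : Mᴴ * M = ((D : ℂ) ^ (δ - 1))⁻¹ • 1 := by
    ext p q
    obtain ⟨s, c⟩ := p
    obtain ⟨t, c'⟩ := q
    simp only [Matrix.mul_apply, Matrix.conjTranspose_apply, Matrix.smul_apply,
      Matrix.one_apply, Matrix.of_apply, hM, smul_eq_mul, Complex.star_def]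
    rw [hIP s t c c']
    by_cases h : (s, c) = (t, c') <;> simp [h]
  have hcardCo : Fintype.card {j : Fin n // j ∉ T} = δ - 1 := by
    rw [← hS, ← Fintype.card_coe]
    exact Fintype.card_congr (Equiv.subtypeEquivRight fun j => (Finset.mem_compl).symm)
  have hcard : Fintype.card (Fin K × CoCfg (fun _ : Fin n => D) T) = Fintype.card (SubCfg (fun _ : Fin n => D) T) := by
    have h1 : Fintype.card (CoCfg (fun _ : Fin n => D) T) = D ^ (δ - 1) := by
      rw [Fintype.card_pi]
      simp [Finset.prod_const, Finset.card_univ, hcardCo]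
    have h2 : Fintype.card (SubCfg (fun _ : Fin n => D) T) = D ^ (n - (δ - 1)) := by
      rw [Fintype.card_pi]
      simp [Finset.prod_const, Finset.card_univ, Fintype.card_coe, hT]
    rw [Fintype.card_prod, Fintype.card_fin, h1, h2, hQMDS, ← pow_add]
    congr 1
    omega
  have hptr : ptr (fun _ : Fin n => D) T (∑ s, dyad (fun _ : Fin n => D) (ψ s) (ψ s)) = M * Mᴴ := by
    ext a b
    show (∑ cc : CoCfg (fun _ : Fin n => D) T, (∑ s, dyad (fun _ : Fin n => D) (ψ s) (ψ s)) (merge (fun _ : Fin n => D) T a cc) (merge (fun _ : Fin n => D) T b cc)) = _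
    simp only [Matrix.sum_apply, dyad, Matrix.of_apply, Matrix.mul_apply,
      Matrix.conjTranspose_apply, hM]
    rw [Fintype.sum_prod_type]
    rw [Finset.sum_comm]
    simp [Complex.star_def]
  by_cases hD : ((D : ℂ) ^ (δ - 1)) = 0
  · obtain ⟨hD1, hδ1⟩ := pow_eq_zero_iff'.mp hD
    have hD0 : D = 0 := by exact_mod_cast hD1
    have hTpos : 0 < T.card := by rw [hT]; omega
    obtain ⟨i, hi⟩ := Finset.card_pos.mp hTpos
    ext a b
    have hlt := (a ⟨i, hi⟩).isLt
    exact absurd hlt (by simp [hD0])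
  · have hμ : ((D : ℂ) ^ (δ - 1))⁻¹ ≠ 0 := inv_ne_zero hD
    have hflip := flip_mul hcard M _ hμ hMM
    rw [hptr, hflip]
end

section
/- Let ((n, K, d))_D be a QMDS code with K > 1, i.e., there exists a K-dimensional (d−1)-uniform subspace of (C^D)^{⊗n} with K = D^{n−2(d−1)} > 1. Then there exists a pure quantum error-correcting code ((2n, 1, d'))_D with distance d' = min(n − d + 2, 2d); equivalently, there exists a (d'−1)-uniform unit vector in (C^D)^{⊗2n} with d' = min(n − d + 2, 2d). -/
/-!
Common definitions: multipartite systems with parties indexed by a finite type `ι`,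
local dimensions `d : ι → ℕ`, vectors as functions on the configuration space,
partial traces, and `r`-uniform states and subspaces.
-/

open scoped ComplexConjugate Matrix

set_option linter.unusedSectionVars false

namespace RUnifAux
open RUnif

variable {ι : Type} [Fintype ι] [DecidableEq ι] {d : ι → ℕ}

/- ## basic algebra -/

lemma ptr_smul (S : Finset ι) (s : ℂ) (M : Matrix (Cfg d) (Cfg d) ℂ) :
    ptr d S (s • M) = s • ptr d S M := by
  ext a b; simp [ptr, Finset.mul_sum]

lemma ptr_add (S : Finset ι) (M N : Matrix (Cfg d) (Cfg d) ℂ) :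
    ptr d S (M + N) = ptr d S M + ptr d S N := by
  ext a b; simp [ptr, Finset.sum_add_distrib]

lemma dyad_add_left (φ χ ψ : H d) : dyad d (φ + χ) ψ = dyad d φ ψ + dyad d χ ψ := by
  ext x y; simp [dyad]; ring

lemma dyad_add_right (φ χ ψ : H d) : dyad d φ (χ + ψ) = dyad d φ χ + dyad d φ ψ := by
  ext x y; simp [dyad]; ring

lemma dyad_smul_left (s : ℂ) (φ ψ : H d) : dyad d (s • φ) ψ = s • dyad d φ ψ := by
  ext x y; simp [dyad]; ring

lemma dyad_smul_right (s : ℂ) (φ ψ : H d) : dyad d φ (s • ψ) = conj s • dyad d φ ψ := by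
  ext x y; simp [dyad]; ring

lemma dotc_add_left (φ χ ψ : H d) : dotc d (φ + χ) ψ = dotc d φ ψ + dotc d χ ψ := by
  simp only [dotc, ← Finset.sum_add_distrib]
  exact Finset.sum_congr rfl fun x _ => by simp [Pi.add_apply]; ring

lemma dotc_add_right (φ χ ψ : H d) : dotc d φ (χ + ψ) = dotc d φ χ + dotc d φ ψ := by
  simp only [dotc, ← Finset.sum_add_distrib]
  exact Finset.sum_congr rfl fun x _ => by simp [Pi.add_apply]; ring

lemma dotc_smul_left (s : ℂ) (φ ψ : H d) : dotc d (s • φ) ψ = conj s * dotc d φ ψ := by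
  simp only [dotc, Finset.mul_sum]
  exact Finset.sum_congr rfl fun x _ => by simp [Pi.smul_apply]; ring

lemma dotc_smul_right (s : ℂ) (φ ψ : H d) : dotc d φ (s • ψ) = s * dotc d φ ψ := by
  simp only [dotc, Finset.mul_sum]
  exact Finset.sum_congr rfl fun x _ => by simp [Pi.smul_apply]; ring

lemma dotc_self (ψ : H d) : dotc d ψ ψ = ((∑ x, Complex.normSq (ψ x) : ℝ) : ℂ) := by
  simp [dotc, Complex.normSq_eq_conj_mul_self]

/- ## merge / splitting machinery -/

def coGlue {S T : Finset ι} (h : S ⊆ T) (u : SubCfg d (T \ S)) (c : CoCfg d T) :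
    CoCfg d S :=
  fun i => if hi : i.1 ∈ T then u ⟨i.1, Finset.mem_sdiff.2 ⟨hi, i.2⟩⟩ else c ⟨i.1, hi⟩

def mergeSub {S T : Finset ι} (h : S ⊆ T) (a : SubCfg d S) (u : SubCfg d (T \ S)) :
    SubCfg d T :=
  fun i => if hi : i.1 ∈ S then a ⟨i.1, hi⟩ else u ⟨i.1, Finset.mem_sdiff.2 ⟨i.2, hi⟩⟩

lemma merge_coGlue {S T : Finset ι} (h : S ⊆ T) (a : SubCfg d S) (u : SubCfg d (T \ S))
    (c : CoCfg d T) :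
    merge d S a (coGlue h u c) = merge d T (mergeSub h a u) c := by
  funext i
  by_cases hT : i ∈ T
  · by_cases hS : i ∈ S <;> simp [merge, coGlue, mergeSub, hS, hT]
  · have hS : i ∉ S := fun hs => hT (h hs)
    simp [merge, coGlue, mergeSub, hS, hT]

lemma mergeSub_injective {S T : Finset ι} (h : S ⊆ T) (u : SubCfg d (T \ S))
    {a b : SubCfg d S} (hab : mergeSub h a u = mergeSub h b u) : a = b := by
  funext i
  have := congrFun hab ⟨i.1, h i.2⟩
  simpa [mergeSub, i.2] using this

lemma coGlue_bijective {S T : Finset ι} (h : S ⊆ T) :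
    Function.Bijective (fun p : SubCfg d (T \ S) × CoCfg d T => coGlue h p.1 p.2) := by
  rw [Function.bijective_iff_has_inverse]
  refine ⟨fun c => ⟨fun i => c ⟨i.1, (Finset.mem_sdiff.1 i.2).2⟩,
    fun i => c ⟨i.1, fun hS => i.2 (h hS)⟩⟩, fun p => ?_, fun c => ?_⟩
  · obtain ⟨u, c⟩ := p
    refine Prod.ext (funext fun i => ?_) (funext fun i => ?_)
    · have := (Finset.mem_sdiff.1 i.2).1
      simp [coGlue, this]
    · have : ¬ i.1 ∈ T := i.2
      simp [coGlue, this]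
  · funext i
    by_cases hT : i.1 ∈ T <;> simp [coGlue, hT]

lemma sum_coCfg_split {S T : Finset ι} (h : S ⊆ T) (f : CoCfg d S → ℂ) :
    ∑ c, f c = ∑ u : SubCfg d (T \ S), ∑ c : CoCfg d T, f (coGlue h u c) := by
  have h1 : ∑ p : SubCfg d (T \ S) × CoCfg d T, f (coGlue h p.1 p.2) = ∑ c, f c :=
    Fintype.sum_bijective _ (coGlue_bijective h) _ _ fun p => rfl
  rw [← h1, Fintype.sum_prod_type]

lemma merge_left_injective (S : Finset ι) (c : CoCfg d S) {a b : SubCfg d S}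
    (hab : merge d S a c = merge d S b c) : a = b := by
  funext i
  have := congrFun hab i.1
  simpa [merge, i.2] using this

/- complement flips -/

def flipSub (S : Finset ι) (c : CoCfg d S) : SubCfg d Sᶜ :=
  fun i => c ⟨i.1, Finset.mem_compl.1 i.2⟩

def flipCo (S : Finset ι) (a : SubCfg d S) : CoCfg d Sᶜ :=
  fun i => a ⟨i.1, by simpa using i.2⟩

lemma merge_flip (S : Finset ι) (a : SubCfg d S) (c : CoCfg d S) :
    merge d Sᶜ (flipSub S c) (flipCo S a) = merge d S a c := by
  funext i
  by_cases hS : i ∈ S <;> simp [merge, flipSub, flipCo, hS]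

lemma flipSub_injective (S : Finset ι) : Function.Injective (flipSub (d := d) S) := by
  intro c c' hcc
  funext i
  exact congrFun hcc ⟨i.1, Finset.mem_compl.2 i.2⟩

lemma flipCo_bijective (S : Finset ι) : Function.Bijective (flipCo (d := d) S) := by
  rw [Function.bijective_iff_has_inverse]
  refine ⟨fun c => fun i => c ⟨i.1, by simpa using i.2⟩, fun a => ?_, fun c => ?_⟩ <;>
    funext i <;> simp [flipCo]

/- ## cardinalities and unifMix for constant local dimension -/

variable {D : ℕ}

lemma card_subCfg (S : Finset ι) :
    Fintype.card (SubCfg (fun _ : ι => D) S) = D ^ S.card := by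
  simp [Fintype.card_pi, Finset.prod_const, Fintype.card_coe]

lemma card_coCfg (S : Finset ι) :
    Fintype.card (CoCfg (fun _ : ι => D) S) = D ^ (Fintype.card ι - S.card) := by
  classical
  have hc : Fintype.card {j : ι // j ∉ S} = Fintype.card ι - S.card := by
    simp [Fintype.card_subtype_compl, Fintype.card_coe]
  rw [Fintype.card_pi, Finset.prod_const]
  simp [Finset.card_univ, hc]

lemma unifMix_const (S : Finset ι) :
    unifMix (fun _ : ι => D) S = (((D : ℂ) ^ S.card)⁻¹) • 1 := by
  rw [unifMix]
  congr 1
  rw [show (∏ i : S, ((fun _ : ι => D) i.1 : ℂ)) = ∏ _i : S, (D : ℂ) from rfl,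
    Finset.prod_const]
  simp [Fintype.card_coe]

/- ## descent: scaled identity passes to subsets -/

lemma ptr_subset_smul_one {S T : Finset ι} (h : S ⊆ T) (M : Matrix (Cfg (fun _ : ι => D)) (Cfg (fun _ : ι => D)) ℂ)
    (κ : ℂ) (hT : ptr (fun _ : ι => D) T M = κ • 1) :
    ptr (fun _ : ι => D) S M = (κ * (D : ℂ) ^ (T.card - S.card)) • 1 := by
  ext a b
  have : ptr (fun _ : ι => D) S M a b
      = ∑ u : SubCfg (fun _ : ι => D) (T \ S), ptr (fun _ : ι => D) T M (mergeSub h a u) (mergeSub h b u) := by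
    simp only [ptr, Matrix.of_apply]
    rw [sum_coCfg_split h]
    refine Finset.sum_congr rfl fun u _ => Finset.sum_congr rfl fun c _ => ?_
    rw [merge_coGlue, merge_coGlue]
  rw [this, hT]
  simp only [Matrix.smul_apply, Matrix.one_apply, smul_eq_mul]
  by_cases hab : a = b
  · subst hab
    simp [Finset.sum_const, card_subCfg, Finset.card_sdiff_of_subset h, mul_comm]
  · have : ∀ u : SubCfg (fun _ : ι => D) (T \ S), mergeSub h a u ≠ mergeSub h b u :=
      fun u he => hab (mergeSub_injective h u he)
    rw [Finset.sum_eq_zero fun u _ => by simp [this u], if_neg hab, mul_zero]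
/- ## polarization -/

lemma ptr_zero (S : Finset ι) : ptr d S (0 : Matrix (Cfg d) (Cfg d) ℂ) = 0 := by
  ext a b; simp [ptr]

lemma ptr_dyad_self {D r : ℕ} {W : Submodule ℂ (H (fun _ : ι => D))}
    (hW : IsUniformSubspace (fun _ : ι => D) r W) {v : H (fun _ : ι => D)} (hv : v ∈ W)
    {S : Finset ι} (hS : S.card = r) :
    ptr (fun _ : ι => D) S (dyad (fun _ : ι => D) v v)
      = (dotc (fun _ : ι => D) v v * ((D : ℂ) ^ r)⁻¹) • 1 := by
  by_cases h0 : v = 0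
  · subst h0
    have hd : dyad (fun _ : ι => D) 0 0 = 0 := by ext x y; simp [dyad]
    have hz : dotc (fun _ : ι => D) 0 0 = (0 : ℂ) := by simp [dotc]
    rw [hd, hz, ptr_zero]; simp
  · set c : ℝ := ∑ x, Complex.normSq (v x) with hc
    have hcpos : 0 < c := by
      obtain ⟨x, hx⟩ : ∃ x, v x ≠ 0 := by
        by_contra h; push_neg at h; exact h0 (funext h)
      exact Finset.sum_pos' (fun _ _ => Complex.normSq_nonneg _)
        ⟨x, Finset.mem_univ _, Complex.normSq_pos.2 hx⟩
    have hdot : dotc (fun _ : ι => D) v v = (c : ℂ) := dotc_self v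
    set t : ℝ := Real.sqrt c with htdef
    have htpos : 0 < t := Real.sqrt_pos.2 hcpos
    have htsq : (t : ℂ) * (t : ℂ) = (c : ℂ) := by
      rw [← Complex.ofReal_mul, Real.mul_self_sqrt hcpos.le]
    set v' : H (fun _ : ι => D) := ((t : ℂ))⁻¹ • v with hv'def
    have hv' : v' ∈ W := W.smul_mem _ hv
    have hconj : conj ((t : ℂ))⁻¹ = ((t : ℂ))⁻¹ := by
      rw [map_inv₀, Complex.conj_ofReal]
    have htne : (t : ℂ) ≠ 0 := by
      simpa using htpos.ne'
    have hcne : (c : ℂ) ≠ 0 := by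
      simpa using hcpos.ne'
    have hunit : IsUnitVec (fun _ : ι => D) v' := by
      rw [IsUnitVec, hv'def, dotc_smul_left, dotc_smul_right, hconj, hdot]
      rw [show ((t:ℂ))⁻¹ * (((t:ℂ))⁻¹ * (c:ℂ)) = ((t:ℂ) * (t:ℂ))⁻¹ * (c:ℂ) by ring,
        htsq, inv_mul_cancel₀ hcne]
    have hu := hW v' hv' hunit S hS
    have hdy : dyad (fun _ : ι => D) v v = (c : ℂ) • dyad (fun _ : ι => D) v' v' := by
      rw [hv'def, dyad_smul_left, dyad_smul_right, hconj, smul_smul, smul_smul]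
      rw [show (c : ℂ) * ((t:ℂ))⁻¹ * ((t:ℂ))⁻¹ = (c : ℂ) * ((t:ℂ) * (t:ℂ))⁻¹ by ring, htsq]
      rw [mul_inv_cancel₀ hcne, one_smul]
    rw [hdy, ptr_smul, hu, unifMix_const, hS, hdot, smul_smul]

lemma ptr_dyad_eq {D r : ℕ} {W : Submodule ℂ (H (fun _ : ι => D))}
    (hW : IsUniformSubspace (fun _ : ι => D) r W) {φ ψ : H (fun _ : ι => D)}
    (hφ : φ ∈ W) (hψ : ψ ∈ W) {S : Finset ι} (hS : S.card = r) :
    ptr (fun _ : ι => D) S (dyad (fun _ : ι => D) φ ψ)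
      = (dotc (fun _ : ι => D) ψ φ * ((D : ℂ) ^ r)⁻¹) • 1 := by
  set B : H (fun _ : ι => D) → H (fun _ : ι => D) →
      Matrix (SubCfg (fun _ : ι => D) S) (SubCfg (fun _ : ι => D) S) ℂ := fun x y =>
    ptr (fun _ : ι => D) S (dyad (fun _ : ι => D) x y)
      - (dotc (fun _ : ι => D) y x * ((D : ℂ) ^ r)⁻¹) • 1 with hB
  have hdiag : ∀ v ∈ W, B v v = 0 := by
    intro v hv
    rw [hB]; dsimp only
    rw [ptr_dyad_self hW hv hS, sub_self]
  have hexp : ∀ x y : H (fun _ : ι => D), B (x + y) (x + y) = B x x + B x y + B y x + B y y := by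
    intro x y
    simp only [hB, dyad_add_left, dyad_add_right, ptr_add, dotc_add_left, dotc_add_right]
    simp only [add_mul, add_smul]
    abel
  have hBl : ∀ (s : ℂ) (x y : H (fun _ : ι => D)), B (s • x) y = s • B x y := by
    intro s x y
    simp only [hB, dyad_smul_left, ptr_smul, dotc_smul_right, smul_sub, smul_smul, mul_assoc]
  have hBr : ∀ (s : ℂ) (x y : H (fun _ : ι => D)), B x (s • y) = conj s • B x y := by
    intro s x y
    simp only [hB, dyad_smul_right, ptr_smul, dotc_smul_left, smul_sub, smul_smul, mul_assoc]
  have h1 : B φ ψ + B ψ φ = 0 := by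
    have := hdiag (φ + ψ) (W.add_mem hφ hψ)
    rw [hexp, hdiag φ hφ, hdiag ψ hψ] at this
    linear_combination (norm := abel) this
  have h2 : (-Complex.I) • B φ ψ + Complex.I • B ψ φ = 0 := by
    have := hdiag (φ + Complex.I • ψ) (W.add_mem hφ (W.smul_mem _ hψ))
    rw [hexp, hdiag φ hφ, hBl, hBr, hBl, hBr, hdiag ψ hψ] at this
    rw [Complex.conj_I] at this
    simpa using this
  have h3 : B ψ φ = -B φ ψ := by linear_combination (norm := abel) h1
  rw [h3] at h2
  rw [smul_neg, ← sub_eq_add_neg, ← sub_smul] at h2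
  have h5 : B φ ψ = 0 := by
    rcases smul_eq_zero.1 h2 with h | h
    · exact absurd h (by norm_num [Complex.ext_iff])
    · exact h
  have := sub_eq_zero.1 h5
  exact this

lemma ptr_dyad_le {D r : ℕ} {W : Submodule ℂ (H (fun _ : ι => D))}
    (hW : IsUniformSubspace (fun _ : ι => D) r W) (hr : r ≤ Fintype.card ι)
    (hD : (D : ℂ) ≠ 0) {φ ψ : H (fun _ : ι => D)}
    (hφ : φ ∈ W) (hψ : ψ ∈ W) {S : Finset ι} (hS : S.card ≤ r) :
    ptr (fun _ : ι => D) S (dyad (fun _ : ι => D) φ ψ)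
      = (dotc (fun _ : ι => D) ψ φ * ((D : ℂ) ^ S.card)⁻¹) • 1 := by
  obtain ⟨T, hST, -, hT⟩ := Finset.exists_subsuperset_card_eq (Finset.subset_univ S) hS
    (by simpa using hr)
  have h1 := ptr_dyad_eq hW hφ hψ hT
  have h2 := ptr_subset_smul_one hST _ _ h1
  rw [h2, hT]
  congr 1
  have hpow : ((D : ℂ) ^ r)⁻¹ * (D : ℂ) ^ (r - S.card) = ((D : ℂ) ^ S.card)⁻¹ := by
    field_simp
    rw [← pow_add]
    congr 1
    omega
  rw [mul_assoc, hpow]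

/- ## hermitian idempotent with zero trace is zero -/

lemma eq_zero_of_trace_conjTranspose_mul_self {m : Type} [Fintype m] [DecidableEq m]
    (R : Matrix m m ℂ) (h : (Rᴴ * R).trace = 0) : R = 0 := by
  have h1 : (∑ p : m × m, Complex.normSq (R p.2 p.1) : ℝ) = 0 := by
    have he : (Rᴴ * R).trace = ((∑ p : m × m, Complex.normSq (R p.2 p.1) : ℝ) : ℂ) := by
      rw [Matrix.trace]
      push_cast
      rw [Fintype.sum_prod_type]
      refine Finset.sum_congr rfl fun j _ => ?_
      rw [Matrix.diag_apply, Matrix.mul_apply]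
      refine Finset.sum_congr rfl fun i _ => ?_
      rw [Matrix.conjTranspose_apply]
      exact (Complex.normSq_eq_conj_mul_self).symm ▸ rfl
    exact_mod_cast he ▸ h
  ext i j
  have h2 := (Finset.sum_eq_zero_iff_of_nonneg
    (fun p _ => Complex.normSq_nonneg (R p.2 p.1))).1 h1 (j, i) (Finset.mem_univ _)
  simpa using Complex.normSq_eq_zero.1 h2
/- ## the QMDS complementary-reduction lemma -/

lemma ptr_finsum {K : ℕ} (S : Finset ι) (M : Fin K → Matrix (Cfg d) (Cfg d) ℂ) :
    ptr d S (∑ i, M i) = ∑ i, ptr d S (M i) := by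
  ext a b
  simp only [ptr, Matrix.of_apply, Matrix.sum_apply]
  rw [Finset.sum_comm]

lemma qmds_reduction {D δ K : ℕ} (hδ : 1 ≤ δ) (hn : 2 * (δ - 1) ≤ Fintype.card ι)
    (hK : K = D ^ (Fintype.card ι - 2 * (δ - 1))) (hD0 : (D : ℂ) ≠ 0)
    {W : Submodule ℂ (H (fun _ : ι => D))}
    (hW : IsUniformSubspace (fun _ : ι => D) (δ - 1) W)
    (e : Fin K → H (fun _ : ι => D)) (he : ∀ i, e i ∈ W)
    (horth : ∀ i j, dotc (fun _ : ι => D) (e i) (e j) = if i = j then 1 else 0)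
    {A : Finset ι} (hA : A.card ≤ Fintype.card ι - (δ - 1)) :
    ptr (fun _ : ι => D) A (∑ i, dyad (fun _ : ι => D) (e i) (e i))
      = ((K : ℂ) * ((D : ℂ) ^ A.card)⁻¹) • 1 := by
  set N := Fintype.card ι with hN
  -- First the case of exact cardinality.
  have core : ∀ A : Finset ι, A.card = N - (δ - 1) →
      ptr (fun _ : ι => D) A (∑ i, dyad (fun _ : ι => D) (e i) (e i))
        = (((D : ℂ) ^ (δ - 1))⁻¹) • 1 := by
    intro A hAc
    have hcompl : Aᶜ.card = δ - 1 := by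
      rw [Finset.card_compl, hAc]
      omega
    set V : Matrix (SubCfg (fun _ : ι => D) A) (CoCfg (fun _ : ι => D) A × Fin K) ℂ :=
      Matrix.of fun a ci => e ci.2 (merge (fun _ : ι => D) A a ci.1) with hV
    have hM : ptr (fun _ : ι => D) A (∑ i, dyad (fun _ : ι => D) (e i) (e i)) = V * Vᴴ := by
      ext a b
      simp only [ptr, Matrix.of_apply, Matrix.mul_apply, Matrix.conjTranspose_apply,
        Matrix.sum_apply, hV]
      rw [Fintype.sum_prod_type]
      refine Finset.sum_congr rfl fun c _ => Finset.sum_congr rfl fun i _ => ?_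
      simp [dyad]
    have hVV : Vᴴ * V = (((D : ℂ) ^ (δ - 1))⁻¹) • 1 := by
      ext ⟨c, i⟩ ⟨c', j⟩
      rw [Matrix.mul_apply]
      have hinner : ∀ a : SubCfg (fun _ : ι => D) A,
          (Vᴴ) (c, i) a * V a (c', j)
            = conj (e i (merge (fun _ : ι => D) A a c))
              * e j (merge (fun _ : ι => D) A a c') := by
        intro a; simp [hV, Matrix.conjTranspose_apply]
      have hbij : ∑ a : SubCfg (fun _ : ι => D) A,
          e i (merge (fun _ : ι => D) A a c) * conj (e j (merge (fun _ : ι => D) A a c'))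
          = ptr (fun _ : ι => D) Aᶜ (dyad (fun _ : ι => D) (e i) (e j))
              (flipSub A c) (flipSub A c') := by
        rw [ptr, Matrix.of_apply]
        refine Fintype.sum_bijective (flipCo A) (flipCo_bijective A) _ _ fun a => ?_
        rw [dyad, Matrix.of_apply, merge_flip, merge_flip]
      have hr : δ - 1 ≤ N := by omega
      have hple := ptr_dyad_le hW hr hD0 (he i) (he j) (le_of_eq hcompl)
      have hsum : ∑ a : SubCfg (fun _ : ι => D) A, (Vᴴ) (c, i) a * V a (c', j)
          = conj (ptr (fun _ : ι => D) Aᶜ (dyad (fun _ : ι => D) (e i) (e j))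
              (flipSub A c) (flipSub A c')) := by
        rw [← hbij, map_sum]
        refine Finset.sum_congr rfl fun a _ => ?_
        rw [hinner a]
        simp [map_mul]
      rw [hsum, hple, hcompl]
      simp only [Matrix.smul_apply, Matrix.one_apply, smul_eq_mul, horth j i]
      by_cases hij : i = j
      · subst hij
        by_cases hcc : c = c'
        · subst hcc; simp
        · have hf : flipSub (d := fun _ : ι => D) A c ≠ flipSub A c' :=
            fun hf => hcc (flipSub_injective A hf)
          simp [hf, hcc, Prod.ext_iff]
      · simp [hij, Ne.symm hij, Prod.ext_iff]
    set lam : ℂ := ((D : ℂ) ^ (δ - 1))⁻¹ with hlam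
    have hlamne : lam ≠ 0 := by
      rw [hlam]
      exact inv_ne_zero (pow_ne_zero _ hD0)
    set M := ptr (fun _ : ι => D) A (∑ i, dyad (fun _ : ι => D) (e i) (e i)) with hMdef
    have hMM : M * M = lam • M := by
      rw [hM, show V * Vᴴ * (V * Vᴴ) = V * (Vᴴ * V) * Vᴴ by
        rw [Matrix.mul_assoc, Matrix.mul_assoc, Matrix.mul_assoc], hVV]
      rw [Matrix.mul_smul, Matrix.mul_one, Matrix.smul_mul]
    have hherm : Mᴴ = M := by
      rw [hM, Matrix.conjTranspose_mul, Matrix.conjTranspose_conjTranspose]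
    have htr : M.trace = (K : ℂ) := by
      rw [hM, Matrix.trace_mul_comm, hVV, Matrix.trace_smul, Matrix.trace_one]
      rw [Fintype.card_prod, card_coCfg, Fintype.card_fin, hAc]
      rw [show N - (N - (δ - 1)) = δ - 1 by omega]
      push_cast
      rw [hlam]
      simp only [smul_eq_mul]
      field_simp
    have hcardA : (Fintype.card (SubCfg (fun _ : ι => D) A) : ℂ) = lam⁻¹ * K := by
      rw [card_subCfg, hAc, hlam, inv_inv, hK,
        show N - (δ - 1) = (δ - 1) + (N - 2 * (δ - 1)) by omega, pow_add]
      push_cast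
      ring
    set R := (1 : Matrix (SubCfg (fun _ : ι => D) A) (SubCfg (fun _ : ι => D) A) ℂ)
      - lam⁻¹ • M with hR
    have hRherm : Rᴴ = R := by
      rw [hR]
      rw [Matrix.conjTranspose_sub, Matrix.conjTranspose_smul, Matrix.conjTranspose_one, hherm]
      congr 1
      rw [hlam]
      simp
    have hRR : R * R = R := by
      have h1 : (lam⁻¹ • M) * (lam⁻¹ • M) = lam⁻¹ • M := by
        rw [Matrix.smul_mul, Matrix.mul_smul, hMM, smul_smul, smul_smul]
        congr 1
        field_simp
      rw [hR, Matrix.sub_mul, Matrix.mul_sub, Matrix.mul_sub, Matrix.one_mul, Matrix.mul_one, h1]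
      simp only [Matrix.one_mul]
      abel
    have htrR : (Rᴴ * R).trace = 0 := by
      rw [hRherm, hRR, hR, Matrix.trace_sub, Matrix.trace_smul, htr, Matrix.trace_one,
        hcardA]
      simp
    have hR0 : R = 0 := eq_zero_of_trace_conjTranspose_mul_self R htrR
    have : lam⁻¹ • M = 1 := by
      have := sub_eq_zero.1 (hR0 ▸ hR ▸ rfl : (1 : Matrix _ _ ℂ) - lam⁻¹ • M = 0)
      exact this.symm
    calc M = lam • (lam⁻¹ • M) := by rw [smul_smul, mul_inv_cancel₀ hlamne, one_smul]
    _ = lam • 1 := by rw [this]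
  -- Now descend to smaller sets.
  obtain ⟨T, hAT, -, hT⟩ := Finset.exists_subsuperset_card_eq (n := N - (δ - 1))
    (Finset.subset_univ A) hA (by rw [Finset.card_univ]; omega)
  have h1 := core T hT
  have h2 := ptr_subset_smul_one hAT _ _ h1
  rw [h2]
  congr 1
  rw [hT, hK]
  have hcard : A.card ≤ N - (δ - 1) := hA
  push_cast
  field_simp
  rw [← pow_add, ← pow_add]
  congr 1
  omega
/- ## extraction of an orthonormal family from a finite-dimensional subspace -/

lemma exists_orthonormal (K : ℕ) (W : Submodule ℂ (H d))
    (hdim : Module.finrank ℂ W = K) :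
    ∃ e : Fin K → H d, (∀ i, e i ∈ W) ∧
      ∀ i j, dotc d (e i) (e j) = if i = j then 1 else 0 := by
  classical
  let E := EuclideanSpace ℂ (Cfg d)
  let L : E ≃ₗ[ℂ] H d := WithLp.linearEquiv 2 ℂ (H d)
  let W' : Submodule ℂ E := W.map (L.symm : H d →ₗ[ℂ] E)
  have hdim' : Module.finrank ℂ W' = K := by
    rw [LinearEquiv.finrank_map_eq, hdim]
  let b := stdOrthonormalBasis ℂ W'
  have hcast : Module.finrank ℂ W' = K := hdim'
  refine ⟨fun i => L ((b (Fin.cast hcast.symm i) : W') : E), fun i => ?_, fun i j => ?_⟩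
  · dsimp only
    obtain ⟨y, hy, hyx⟩ := Submodule.mem_map.1 (b (Fin.cast hcast.symm i)).2
    have : L ((b (Fin.cast hcast.symm i) : W') : E) = y := by
      rw [← hyx]; simp
    rw [this]; exact hy
  · have horth := b.orthonormal
    rw [orthonormal_iff_ite] at horth
    have h1 := horth (Fin.cast hcast.symm i) (Fin.cast hcast.symm j)
    have h2 : dotc d (L ((b (Fin.cast hcast.symm i) : W') : E))
        (L ((b (Fin.cast hcast.symm j) : W') : E))
        = (inner ℂ ((b (Fin.cast hcast.symm i) : W') : E)
            ((b (Fin.cast hcast.symm j) : W') : E) : ℂ) := by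
      rw [dotc]
      rw [PiLp.inner_apply]
      refine Finset.sum_congr rfl fun x _ => ?_
      rw [RCLike.inner_apply']
      rfl
    rw [h2, ← Submodule.coe_inner, h1]
    by_cases hij : i = j
    · subst hij; simp
    · have hne : Fin.cast hcast.symm i ≠ Fin.cast hcast.symm j := fun h =>
        hij (Fin.ext (by simpa using congrArg Fin.val h))
      rw [if_neg hne, if_neg hij]
/- ## two copies: the index type `ι ⊕ ι` -/

section Sum

variable {D : ℕ}

def subPair (S : Finset (ι ⊕ ι)) (a : SubCfg (fun _ : ι => D) S.toLeft)
    (b : SubCfg (fun _ : ι => D) S.toRight) : SubCfg (fun _ : ι ⊕ ι => D) S :=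
  fun i => match i with
  | ⟨Sum.inl x, h⟩ => a ⟨x, Finset.mem_toLeft.2 h⟩
  | ⟨Sum.inr x, h⟩ => b ⟨x, Finset.mem_toRight.2 h⟩

def coPair (S : Finset (ι ⊕ ι)) (c : CoCfg (fun _ : ι => D) S.toLeft)
    (c' : CoCfg (fun _ : ι => D) S.toRight) : CoCfg (fun _ : ι ⊕ ι => D) S :=
  fun i => match i with
  | ⟨Sum.inl x, h⟩ => c ⟨x, fun hx => h (Finset.mem_toLeft.1 hx)⟩
  | ⟨Sum.inr x, h⟩ => c' ⟨x, fun hx => h (Finset.mem_toRight.1 hx)⟩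

lemma subPair_bijective (S : Finset (ι ⊕ ι)) :
    Function.Bijective (fun p : SubCfg (fun _ : ι => D) S.toLeft × SubCfg (fun _ : ι => D) S.toRight
      => subPair S p.1 p.2) := by
  rw [Function.bijective_iff_has_inverse]
  refine ⟨fun s => ⟨fun x => s ⟨Sum.inl x.1, Finset.mem_toLeft.1 x.2⟩,
      fun x => s ⟨Sum.inr x.1, Finset.mem_toRight.1 x.2⟩⟩, fun p => ?_, fun s => ?_⟩
  · refine Prod.ext (funext fun x => ?_) (funext fun x => ?_) <;> rfl
  · funext i
    rcases i with ⟨(x | x), h⟩ <;> rfl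

lemma coPair_bijective (S : Finset (ι ⊕ ι)) :
    Function.Bijective (fun p : CoCfg (fun _ : ι => D) S.toLeft × CoCfg (fun _ : ι => D) S.toRight
      => coPair S p.1 p.2) := by
  rw [Function.bijective_iff_has_inverse]
  refine ⟨fun s => ⟨fun x => s ⟨Sum.inl x.1, fun h => x.2 (Finset.mem_toLeft.2 h)⟩,
      fun x => s ⟨Sum.inr x.1, fun h => x.2 (Finset.mem_toRight.2 h)⟩⟩, fun p => ?_, fun s => ?_⟩
  · refine Prod.ext (funext fun x => ?_) (funext fun x => ?_) <;> rfl
  · funext i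
    rcases i with ⟨(x | x), h⟩ <;> rfl

lemma merge_pair_inl (S : Finset (ι ⊕ ι)) (a : SubCfg (fun _ : ι => D) S.toLeft)
    (b : SubCfg (fun _ : ι => D) S.toRight) (c : CoCfg (fun _ : ι => D) S.toLeft)
    (c' : CoCfg (fun _ : ι => D) S.toRight) (x : ι) :
    merge (fun _ : ι ⊕ ι => D) S (subPair S a b) (coPair S c c') (Sum.inl x)
      = merge (fun _ : ι => D) S.toLeft a c x := by
  by_cases hx : x ∈ S.toLeft
  · have hx' : Sum.inl x ∈ S := Finset.mem_toLeft.1 hx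
    simp [merge, subPair, coPair, hx, hx']
  · have hx' : Sum.inl x ∉ S := fun h => hx (Finset.mem_toLeft.2 h)
    simp [merge, subPair, coPair, hx, hx']

lemma merge_pair_inr (S : Finset (ι ⊕ ι)) (a : SubCfg (fun _ : ι => D) S.toLeft)
    (b : SubCfg (fun _ : ι => D) S.toRight) (c : CoCfg (fun _ : ι => D) S.toLeft)
    (c' : CoCfg (fun _ : ι => D) S.toRight) (x : ι) :
    merge (fun _ : ι ⊕ ι => D) S (subPair S a b) (coPair S c c') (Sum.inr x)
      = merge (fun _ : ι => D) S.toRight b c' x := by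
  by_cases hx : x ∈ S.toRight
  · have hx' : Sum.inr x ∈ S := Finset.mem_toRight.1 hx
    simp [merge, subPair, coPair, hx, hx']
  · have hx' : Sum.inr x ∉ S := fun h => hx (Finset.mem_toRight.2 h)
    simp [merge, subPair, coPair, hx, hx']

lemma elim_bijective :
    Function.Bijective (fun p : Cfg (fun _ : ι => D) × Cfg (fun _ : ι => D) =>
      (Sum.elim p.1 p.2 : Cfg (fun _ : ι ⊕ ι => D))) := by
  rw [Function.bijective_iff_has_inverse]
  refine ⟨fun z => ⟨fun x => z (Sum.inl x), fun x => z (Sum.inr x)⟩, fun p => ?_, fun z => ?_⟩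
  · refine Prod.ext (funext fun x => rfl) (funext fun x => rfl)
  · funext i
    rcases i with x | x <;> rfl

end Sum

/- ## bilinearity of dotc and dyad over finite sums -/

lemma dotc_sum_left {K : ℕ} (f : Fin K → H d) (ψ : H d) :
    dotc d (∑ i, f i) ψ = ∑ i, dotc d (f i) ψ := by
  simp only [dotc]
  rw [Finset.sum_comm]
  refine Finset.sum_congr rfl fun x _ => ?_
  rw [Finset.sum_apply, map_sum, Finset.sum_mul]

lemma dotc_sum_right {K : ℕ} (φ : H d) (f : Fin K → H d) :
    dotc d φ (∑ i, f i) = ∑ i, dotc d φ (f i) := by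
  simp only [dotc]
  rw [Finset.sum_comm]
  refine Finset.sum_congr rfl fun x _ => ?_
  rw [Finset.sum_apply, Finset.mul_sum]

lemma dyad_sum_left {K : ℕ} (f : Fin K → H d) (ψ : H d) :
    dyad d (∑ i, f i) ψ = ∑ i, dyad d (f i) ψ := by
  ext x y
  simp only [dyad, Matrix.of_apply, Matrix.sum_apply, Finset.sum_apply, Finset.sum_mul]

lemma dyad_sum_right {K : ℕ} (φ : H d) (f : Fin K → H d) :
    dyad d φ (∑ i, f i) = ∑ i, dyad d φ (f i) := by
  ext x y
  simp only [dyad, Matrix.of_apply, Matrix.sum_apply, Finset.sum_apply, map_sum,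
    Finset.mul_sum]
/- ## the maximally entangled state over the code subspace -/

lemma sum_state {D δ K : ℕ} (hδ : 1 ≤ δ) (hn : 2 * (δ - 1) ≤ Fintype.card ι)
    (hK : K = D ^ (Fintype.card ι - 2 * (δ - 1))) (hKpos : 0 < K) (hD0 : (D : ℂ) ≠ 0)
    {W : Submodule ℂ (H (fun _ : ι => D))}
    (hW : IsUniformSubspace (fun _ : ι => D) (δ - 1) W)
    (e : Fin K → H (fun _ : ι => D)) (he : ∀ i, e i ∈ W)
    (horth : ∀ i j, dotc (fun _ : ι => D) (e i) (e j) = if i = j then 1 else 0) :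
    ∃ ψ : H (fun _ : ι ⊕ ι => D), IsUnitVec (fun _ : ι ⊕ ι => D) ψ ∧
      ∀ S : Finset (ι ⊕ ι), S.toLeft.card ≤ Fintype.card ι - (δ - 1) →
        S.toRight.card ≤ Fintype.card ι - (δ - 1) →
        (S.toLeft.card ≤ δ - 1 ∨ S.toRight.card ≤ δ - 1) →
        ptr (fun _ : ι ⊕ ι => D) S (dyad (fun _ : ι ⊕ ι => D) ψ ψ)
          = unifMix (fun _ : ι ⊕ ι => D) S := by
  classical
  set N := Fintype.card ι with hN
  have hKne : (K : ℂ) ≠ 0 := Nat.cast_ne_zero.2 hKpos.ne'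
  set s : ℂ := (((Real.sqrt K : ℝ)) : ℂ)⁻¹ with hs
  have hss : conj s * s = ((K : ℂ))⁻¹ := by
    rw [hs, map_inv₀, Complex.conj_ofReal, ← mul_inv, ← Complex.ofReal_mul,
      Real.mul_self_sqrt (Nat.cast_nonneg K)]
    norm_num
  set Ψ : Fin K → H (fun _ : ι ⊕ ι => D) := fun i z =>
    e i (fun x => z (Sum.inl x)) * conj (e i (fun x => z (Sum.inr x))) with hΨ
  set ψ : H (fun _ : ι ⊕ ι => D) := s • ∑ i, Ψ i with hψ
  -- inner products of the Ψ's
  have hdot : ∀ i j, dotc (fun _ : ι ⊕ ι => D) (Ψ i) (Ψ j) = if i = j then 1 else 0 := by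
    intro i j
    have h1 : dotc (fun _ : ι ⊕ ι => D) (Ψ i) (Ψ j)
        = dotc (fun _ : ι => D) (e i) (e j) * conj (dotc (fun _ : ι => D) (e i) (e j)) := by
      rw [dotc,
        ← Fintype.sum_bijective _ (elim_bijective (ι := ι) (D := D))
          (fun p => conj (Ψ i (Sum.elim p.1 p.2)) * Ψ j (Sum.elim p.1 p.2))
          (fun z => conj (Ψ i z) * Ψ j z) (fun p => rfl),
        Fintype.sum_prod_type]
      have hterm : ∀ u v : Cfg (fun _ : ι => D),
          conj (Ψ i (Sum.elim u v)) * Ψ j (Sum.elim u v)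
            = (conj (e i u) * e j u) * (e i v * conj (e j v)) := by
        intro u v
        show conj (e i u * conj (e i v)) * (e j u * conj (e j v)) = _
        rw [map_mul, Complex.conj_conj]
        ring
      simp_rw [hterm]
      rw [← Finset.sum_mul_sum]
      congr 1
      simp only [dotc, map_sum, map_mul, Complex.conj_conj]
    rw [h1, horth]
    split_ifs <;> simp
  -- unit vector
  have hunit : IsUnitVec (fun _ : ι ⊕ ι => D) ψ := by
    rw [IsUnitVec, hψ, dotc_smul_left, dotc_smul_right, dotc_sum_left]
    have : ∀ i : Fin K, dotc (fun _ : ι ⊕ ι => D) (Ψ i) (∑ j, Ψ j) = 1 := by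
      intro i
      rw [dotc_sum_right]
      simp [hdot]
    rw [Finset.sum_congr rfl fun i _ => this i]
    simp only [Finset.sum_const, Finset.card_univ, Fintype.card_fin, nsmul_eq_mul, mul_one]
    rw [← mul_assoc, hss, inv_mul_cancel₀ hKne]
  refine ⟨ψ, hunit, fun S hA hB hmin => ?_⟩
  -- the partial trace of a single dyad `|Ψ i⟩⟨Ψ j|` factorizes
  have hfact : ∀ (i j : Fin K) (a : SubCfg (fun _ : ι => D) S.toLeft)
      (b : SubCfg (fun _ : ι => D) S.toRight) (a' : SubCfg (fun _ : ι => D) S.toLeft)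
      (b' : SubCfg (fun _ : ι => D) S.toRight),
      ptr (fun _ : ι ⊕ ι => D) S (dyad (fun _ : ι ⊕ ι => D) (Ψ i) (Ψ j))
          (subPair S a b) (subPair S a' b')
        = ptr (fun _ : ι => D) S.toLeft (dyad (fun _ : ι => D) (e i) (e j)) a a'
          * conj (ptr (fun _ : ι => D) S.toRight (dyad (fun _ : ι => D) (e i) (e j)) b b') := by
    intro i j a b a' b'
    rw [ptr, Matrix.of_apply,
      ← Fintype.sum_bijective _ (coPair_bijective (ι := ι) (D := D) S)
        (fun p => dyad (fun _ : ι ⊕ ι => D) (Ψ i) (Ψ j)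
          (merge (fun _ : ι ⊕ ι => D) S (subPair S a b) (coPair S p.1 p.2))
          (merge (fun _ : ι ⊕ ι => D) S (subPair S a' b') (coPair S p.1 p.2)))
        _ (fun p => rfl),
      Fintype.sum_prod_type]
    have hterm : ∀ (c : CoCfg (fun _ : ι => D) S.toLeft) (c' : CoCfg (fun _ : ι => D) S.toRight),
        dyad (fun _ : ι ⊕ ι => D) (Ψ i) (Ψ j)
          (merge (fun _ : ι ⊕ ι => D) S (subPair S a b) (coPair S c c'))
          (merge (fun _ : ι ⊕ ι => D) S (subPair S a' b') (coPair S c c'))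
        = (e i (merge (fun _ : ι => D) S.toLeft a c)
            * conj (e j (merge (fun _ : ι => D) S.toLeft a' c)))
          * conj (e i (merge (fun _ : ι => D) S.toRight b c')
            * conj (e j (merge (fun _ : ι => D) S.toRight b' c'))) := by
      intro c c'
      have hl : (fun x => merge (fun _ : ι ⊕ ι => D) S (subPair S a b) (coPair S c c') (Sum.inl x))
          = merge (fun _ : ι => D) S.toLeft a c := funext fun x => merge_pair_inl S a b c c' x
      have hr : (fun x => merge (fun _ : ι ⊕ ι => D) S (subPair S a b) (coPair S c c') (Sum.inr x))
          = merge (fun _ : ι => D) S.toRight b c' := funext fun x => merge_pair_inr S a b c c' x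
      have hl' : (fun x => merge (fun _ : ι ⊕ ι => D) S (subPair S a' b') (coPair S c c') (Sum.inl x))
          = merge (fun _ : ι => D) S.toLeft a' c := funext fun x => merge_pair_inl S a' b' c c' x
      have hr' : (fun x => merge (fun _ : ι ⊕ ι => D) S (subPair S a' b') (coPair S c c') (Sum.inr x))
          = merge (fun _ : ι => D) S.toRight b' c' := funext fun x => merge_pair_inr S a' b' c c' x
      show (e i _ * conj (e i _)) * conj (e j _ * conj (e j _)) = _
      rw [hl, hr, hl', hr']
      simp only [map_mul, Complex.conj_conj]
      ring
    simp_rw [hterm]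
    rw [← Finset.sum_mul_sum]
    congr 1
    simp only [ptr, Matrix.of_apply, dyad, map_sum, map_mul, Complex.conj_conj]
  -- assemble the partial trace of `|ψ⟩⟨ψ|`
  have hmain : ptr (fun _ : ι ⊕ ι => D) S (dyad (fun _ : ι ⊕ ι => D) ψ ψ)
      = (conj s * s) • ∑ i, ∑ j, ptr (fun _ : ι ⊕ ι => D) S
          (dyad (fun _ : ι ⊕ ι => D) (Ψ i) (Ψ j)) := by
    rw [hψ, dyad_smul_left, dyad_smul_right, dyad_sum_left, smul_smul, mul_comm (conj s) s]
    rw [show (∑ i, dyad (fun _ : ι ⊕ ι => D) (Ψ i) (∑ j, Ψ j))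
        = ∑ i, ∑ j, dyad (fun _ : ι ⊕ ι => D) (Ψ i) (Ψ j) from
      Finset.sum_congr rfl fun i _ => dyad_sum_right _ _]
    rw [ptr_smul, ptr_finsum]
    rw [mul_comm s (conj s)]
    congr 1
    exact Finset.sum_congr rfl fun i _ => ptr_finsum _ _
  -- pointwise computation
  ext st st'
  obtain ⟨⟨a, b⟩, rfl⟩ := (subPair_bijective (ι := ι) (D := D) S).surjective st
  obtain ⟨⟨a', b'⟩, rfl⟩ := (subPair_bijective (ι := ι) (D := D) S).surjective st'
  have hpairne : (subPair S a b = subPair S a' b') ↔ (a = a' ∧ b = b') := by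
    constructor
    · intro h
      have h2 := (subPair_bijective (ι := ι) (D := D) S).injective
        (a₁ := (a, b)) (a₂ := (a', b')) h
      exact ⟨congrArg Prod.fst h2, congrArg Prod.snd h2⟩
    · rintro ⟨rfl, rfl⟩; rfl
  rw [hmain, unifMix_const]
  simp only [Matrix.smul_apply, Matrix.sum_apply, smul_eq_mul, Matrix.one_apply]
  rw [hss]
  have hcardS : S.card = S.toLeft.card + S.toRight.card :=
    (Finset.card_toLeft_add_card_toRight (u := S)).symm
  have hδN : δ - 1 ≤ N := by omega
  have hsplit : (if subPair S a b = subPair S a' b' then (1:ℂ) else 0)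
      = (if a = a' then (1:ℂ) else 0) * (if b = b' then (1:ℂ) else 0) := by
    simp only [hpairne]
    by_cases h1 : a = a' <;> by_cases h2 : b = b' <;> simp [h1, h2]
  rcases hmin with hmin | hmin
  · -- left part small
    have hAval : ∀ i j : Fin K,
        ptr (fun _ : ι => D) S.toLeft (dyad (fun _ : ι => D) (e i) (e j)) a a'
          = (if j = i then (1:ℂ) else 0) * (((D : ℂ) ^ S.toLeft.card)⁻¹
            * (if a = a' then (1:ℂ) else 0)) := by
      intro i j
      rw [ptr_dyad_le hW hδN hD0 (he i) (he j) hmin, horth]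
      simp only [Matrix.smul_apply, Matrix.one_apply, smul_eq_mul]
      ring
    have hq := qmds_reduction hδ hn hK hD0 hW e he horth hB
    rw [ptr_finsum] at hq
    have hBe : ∑ i, ptr (fun _ : ι => D) S.toRight (dyad (fun _ : ι => D) (e i) (e i)) b b'
        = (K : ℂ) * (((D : ℂ) ^ S.toRight.card)⁻¹ * (if b = b' then (1:ℂ) else 0)) := by
      have h3 := congrFun (congrFun hq b) b'
      simp only [Matrix.sum_apply, Matrix.smul_apply, Matrix.one_apply, smul_eq_mul] at h3
      rw [h3]; ring
    have hstep : ∀ i : Fin K, ∑ j, ptr (fun _ : ι ⊕ ι => D) S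
        (dyad (fun _ : ι ⊕ ι => D) (Ψ i) (Ψ j)) (subPair S a b) (subPair S a' b')
        = ((D : ℂ) ^ S.toLeft.card)⁻¹ * (if a = a' then (1:ℂ) else 0)
          * conj (ptr (fun _ : ι => D) S.toRight (dyad (fun _ : ι => D) (e i) (e i)) b b') := by
      intro i
      have h4 : ∀ j : Fin K, ptr (fun _ : ι ⊕ ι => D) S
          (dyad (fun _ : ι ⊕ ι => D) (Ψ i) (Ψ j)) (subPair S a b) (subPair S a' b')
          = (if j = i then (1:ℂ) else 0) * (((D : ℂ) ^ S.toLeft.card)⁻¹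
            * (if a = a' then (1:ℂ) else 0)
            * conj (ptr (fun _ : ι => D) S.toRight (dyad (fun _ : ι => D) (e i) (e j)) b b')) := by
        intro j
        rw [hfact, hAval]
        ring
      simp_rw [h4]
      simp [ite_mul]
    rw [Finset.sum_congr rfl fun i _ => hstep i, ← Finset.mul_sum, ← map_sum, hBe]
    have hconj : conj ((K : ℂ) * (((D : ℂ) ^ S.toRight.card)⁻¹ * (if b = b' then (1:ℂ) else 0)))
        = (K : ℂ) * (((D : ℂ) ^ S.toRight.card)⁻¹ * (if b = b' then (1:ℂ) else 0)) := by
      simp only [map_mul, map_inv₀, map_pow, Complex.conj_natCast,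
        apply_ite (starRingEnd ℂ), map_one, map_zero]
    rw [hconj, hsplit, hcardS, pow_add, mul_inv]
    field_simp
  · -- right part small
    have hBval : ∀ i j : Fin K,
        conj (ptr (fun _ : ι => D) S.toRight (dyad (fun _ : ι => D) (e i) (e j)) b b')
          = (if j = i then (1:ℂ) else 0) * (((D : ℂ) ^ S.toRight.card)⁻¹
            * (if b = b' then (1:ℂ) else 0)) := by
      intro i j
      rw [ptr_dyad_le hW hδN hD0 (he i) (he j) hmin, horth]
      simp only [Matrix.smul_apply, Matrix.one_apply, smul_eq_mul]
      simp only [map_mul, map_inv₀, map_pow, Complex.conj_natCast,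
        apply_ite (starRingEnd ℂ), map_one, map_zero]
      ring
    have hq := qmds_reduction hδ hn hK hD0 hW e he horth hA
    rw [ptr_finsum] at hq
    have hAe : ∑ i, ptr (fun _ : ι => D) S.toLeft (dyad (fun _ : ι => D) (e i) (e i)) a a'
        = (K : ℂ) * (((D : ℂ) ^ S.toLeft.card)⁻¹ * (if a = a' then (1:ℂ) else 0)) := by
      have h3 := congrFun (congrFun hq a) a'
      simp only [Matrix.sum_apply, Matrix.smul_apply, Matrix.one_apply, smul_eq_mul] at h3
      rw [h3]; ring
    have hstep : ∀ i : Fin K, ∑ j, ptr (fun _ : ι ⊕ ι => D) S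
        (dyad (fun _ : ι ⊕ ι => D) (Ψ i) (Ψ j)) (subPair S a b) (subPair S a' b')
        = ptr (fun _ : ι => D) S.toLeft (dyad (fun _ : ι => D) (e i) (e i)) a a'
          * (((D : ℂ) ^ S.toRight.card)⁻¹ * (if b = b' then (1:ℂ) else 0)) := by
      intro i
      have h4 : ∀ j : Fin K, ptr (fun _ : ι ⊕ ι => D) S
          (dyad (fun _ : ι ⊕ ι => D) (Ψ i) (Ψ j)) (subPair S a b) (subPair S a' b')
          = (if j = i then (1:ℂ) else 0)
            * (ptr (fun _ : ι => D) S.toLeft (dyad (fun _ : ι => D) (e i) (e j)) a a'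
              * (((D : ℂ) ^ S.toRight.card)⁻¹ * (if b = b' then (1:ℂ) else 0))) := by
        intro j
        rw [hfact, hBval]
        ring
      simp_rw [h4]
      simp [ite_mul]
    rw [Finset.sum_congr rfl fun i _ => hstep i, ← Finset.sum_mul, hAe]
    rw [hsplit, hcardS, pow_add, mul_inv]
    field_simp
/- ## transport along a relabeling of the parties -/

section Transport

variable {κ₁ κ₂ : Type} [Fintype κ₁] [DecidableEq κ₁] [Fintype κ₂] [DecidableEq κ₂] {D : ℕ}

def cfgMap (E : κ₁ ≃ κ₂) (x : Cfg (fun _ : κ₁ => D)) : Cfg (fun _ : κ₂ => D) :=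
  fun k => x (E.symm k)

lemma cfgMap_bijective (E : κ₁ ≃ κ₂) : Function.Bijective (cfgMap (D := D) E) := by
  rw [Function.bijective_iff_has_inverse]
  exact ⟨fun z => fun i => z (E i),
    fun x => funext fun i => congrArg x (E.symm_apply_apply i),
    fun z => funext fun k => congrArg z (E.apply_symm_apply k)⟩

lemma transport_unit (E : κ₁ ≃ κ₂) (ψ : H (fun _ : κ₂ => D))
    (h : IsUnitVec (fun _ : κ₂ => D) ψ) :
    IsUnitVec (fun _ : κ₁ => D) (fun x => ψ (cfgMap E x)) := by
  rw [IsUnitVec, dotc] at h ⊢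
  rw [← h]
  exact Fintype.sum_bijective (cfgMap E) (cfgMap_bijective E) _ _ fun x => rfl

def subMap (E : κ₁ ≃ κ₂) (S : Finset κ₁) (a : SubCfg (fun _ : κ₁ => D) S) :
    SubCfg (fun _ : κ₂ => D) (S.map E.toEmbedding) :=
  fun k => a ⟨E.symm k.1, Finset.mem_map_equiv.1 k.2⟩

def coMap (E : κ₁ ≃ κ₂) (S : Finset κ₁) (c : CoCfg (fun _ : κ₁ => D) S) :
    CoCfg (fun _ : κ₂ => D) (S.map E.toEmbedding) :=
  fun k => c ⟨E.symm k.1, fun h => k.2 (Finset.mem_map_equiv.2 h)⟩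

lemma coMap_bijective (E : κ₁ ≃ κ₂) (S : Finset κ₁) :
    Function.Bijective (coMap (D := D) E S) := by
  rw [Function.bijective_iff_has_inverse]
  refine ⟨fun c' => fun i => c' ⟨E i.1, fun h => i.2 (by
      have := Finset.mem_map_equiv.1 h
      simpa using this)⟩, fun c => ?_, fun c' => ?_⟩
  · funext i
    exact congrArg c (Subtype.ext (by simp))
  · funext k
    exact congrArg c' (Subtype.ext (by simp))

lemma subMap_inj (E : κ₁ ≃ κ₂) (S : Finset κ₁) {a b : SubCfg (fun _ : κ₁ => D) S}
    (h : subMap E S a = subMap E S b) : a = b := by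
  funext i
  have hmem : E i.1 ∈ S.map E.toEmbedding := by
    rw [Finset.mem_map_equiv]
    simpa using i.2
  have h1 : a ⟨E.symm (E i.1), Finset.mem_map_equiv.1 hmem⟩
      = b ⟨E.symm (E i.1), Finset.mem_map_equiv.1 hmem⟩ := congrFun h ⟨E i.1, hmem⟩
  calc a i = a ⟨E.symm (E i.1), Finset.mem_map_equiv.1 hmem⟩ :=
        congrArg a (Subtype.ext (by simp))
  _ = b ⟨E.symm (E i.1), Finset.mem_map_equiv.1 hmem⟩ := h1
  _ = b i := congrArg b (Subtype.ext (by simp))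

lemma cfgMap_merge (E : κ₁ ≃ κ₂) (S : Finset κ₁) (a : SubCfg (fun _ : κ₁ => D) S)
    (c : CoCfg (fun _ : κ₁ => D) S) :
    cfgMap E (merge (fun _ : κ₁ => D) S a c)
      = merge (fun _ : κ₂ => D) (S.map E.toEmbedding) (subMap E S a) (coMap E S c) := by
  funext k
  by_cases hk : E.symm k ∈ S
  · have hk' : k ∈ S.map E.toEmbedding := Finset.mem_map_equiv.2 hk
    simp [cfgMap, merge, subMap, coMap, hk, hk']
  · have hk' : k ∉ S.map E.toEmbedding := fun h => hk (Finset.mem_map_equiv.1 h)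
    simp [cfgMap, merge, subMap, coMap, hk, hk']

lemma transport_ptr (E : κ₁ ≃ κ₂) (ψ : H (fun _ : κ₂ => D)) (S : Finset κ₁)
    (h : ptr (fun _ : κ₂ => D) (S.map E.toEmbedding) (dyad (fun _ : κ₂ => D) ψ ψ)
      = unifMix (fun _ : κ₂ => D) (S.map E.toEmbedding)) :
    ptr (fun _ : κ₁ => D) S
        (dyad (fun _ : κ₁ => D) (fun x => ψ (cfgMap E x)) (fun x => ψ (cfgMap E x)))
      = unifMix (fun _ : κ₁ => D) S := by
  ext a b
  have key : ptr (fun _ : κ₁ => D) S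
      (dyad (fun _ : κ₁ => D) (fun x => ψ (cfgMap E x)) (fun x => ψ (cfgMap E x))) a b
      = ptr (fun _ : κ₂ => D) (S.map E.toEmbedding) (dyad (fun _ : κ₂ => D) ψ ψ)
          (subMap E S a) (subMap E S b) := by
    rw [ptr, ptr, Matrix.of_apply, Matrix.of_apply]
    refine Fintype.sum_bijective (coMap (D := D) E S) (coMap_bijective E S) _ _ fun c => ?_
    rw [dyad, dyad, Matrix.of_apply, Matrix.of_apply, ← cfgMap_merge, ← cfgMap_merge]
  rw [key, h, unifMix_const, unifMix_const]
  simp only [Matrix.smul_apply, Matrix.one_apply, smul_eq_mul, Finset.card_map]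
  congr 1
  by_cases hab : a = b
  · subst hab; simp
  · have : subMap (D := D) E S a ≠ subMap E S b := fun hc => hab (subMap_inj E S hc)
    simp [hab, this]

end Transport
end RUnifAux

open RUnif in
/-- If there is a QMDS code `((n, K, δ))_D` with `K > 1` (i.e. a
`K`-dimensional `(δ-1)`-uniform subspace of `(ℂ^D)^{⊗n}` with `K = D^{n-2(δ-1)}`),
then there exists a pure code `((2n, 1, δ'))_D` with `δ' = min(n - δ + 2, 2δ)`,
i.e. a `(δ'-1)`-uniform unit vector in `(ℂ^D)^{⊗2n}`. -/
theorem statement8 (n D δ K : ℕ) (hδ : 1 ≤ δ) (hn : 2 * (δ - 1) ≤ n)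
    (hQMDS : K = D ^ (n - 2 * (δ - 1))) (hK : 1 < K)
    (W : Submodule ℂ (H (fun _ : Fin n => D)))
    (hW : IsUniformSubspace (fun _ : Fin n => D) (δ - 1) W)
    (hdim : Module.finrank ℂ W = K) :
    ∃ ψ : H (fun _ : Fin (2 * n) => D),
      IsUnitVec (fun _ : Fin (2 * n) => D) ψ ∧
      IsUniform (fun _ : Fin (2 * n) => D) (min (n - δ + 2) (2 * δ) - 1) ψ := by
  classical
  have hm : n - 2 * (δ - 1) ≠ 0 := by
    intro h; rw [h, pow_zero] at hQMDS; omega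
  have hD2 : 1 < D := by
    by_contra hle
    push_neg at hle
    interval_cases D
    · rw [Nat.zero_pow (by omega)] at hQMDS; omega
    · rw [one_pow] at hQMDS; omega
  have hD0 : ((D : ℂ)) ≠ 0 := Nat.cast_ne_zero.2 (by omega)
  have hKpos : 0 < K := by omega
  obtain ⟨e, he, horth⟩ := RUnifAux.exists_orthonormal K W hdim
  obtain ⟨ψ, hunit, hunif⟩ := RUnifAux.sum_state (ι := Fin n) hδ
    (by rw [Fintype.card_fin]; exact hn) (by rw [Fintype.card_fin]; exact hQMDS)
    hKpos hD0 hW e he horth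
  set E : Fin (2 * n) ≃ (Fin n ⊕ Fin n) := (finCongr (two_mul n)).trans finSumFinEquiv.symm
    with hE
  refine ⟨fun x => ψ (RUnifAux.cfgMap E x), RUnifAux.transport_unit E ψ hunit, ?_⟩
  intro S hS
  apply RUnifAux.transport_ptr E ψ S
  set S' := S.map E.toEmbedding with hS'
  have hc : S'.card = min (n - δ + 2) (2 * δ) - 1 := by rw [hS', Finset.card_map, hS]
  have hAB : S'.toLeft.card + S'.toRight.card = S'.card :=
    Finset.card_toLeft_add_card_toRight (u := S')
  apply hunif S'
  · rw [Fintype.card_fin]; omega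
  · rw [Fintype.card_fin]; omega
  · omega
end

section
/- There exists a 3-uniform unit vector of 8 qubits, i.e., a unit vector ψ ∈ (C^2)^{⊗8} all of whose reductions to any 3 of the 8 parties are maximally mixed; equivalently, there exists a pure quantum error-correcting code ((8, 1, 4))_2. -/
/-!
Common definitions: multipartite systems with parties indexed by a finite type `ι`,
local dimensions `d : ι → ℕ`, vectors as functions on the configuration space,
partial traces, and `r`-uniform states and subspaces.
-/

open scoped ComplexConjugate Matrix

/-!
The state is the uniform superposition `|C|^{-1/2} ∑_{x ∈ C} |x⟩` over the extended Hamming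
code `C = [8, 4, 4]₂`. The entry `(a, b)` of its reduction to a set `S` of parties counts the
pairs of codewords that restrict to `a` and `b` on `S` and agree outside `S`. Two distinct
codewords differ in at least `4 > |S|` places, so the off-diagonal entries vanish; and `C` is
an orthogonal array of strength `3` (every pattern on three positions occurs in exactly two
codewords), so the diagonal is constant.
-/

namespace RUnif

open Finset

variable {ι : Type} {d : ι → ℕ}

section merge

variable [DecidableEq ι] {S : Finset ι}

lemma merge_apply_of_mem (a : SubCfg d S) (c : CoCfg d S) {i : ι} (h : i ∈ S) :
    merge d S a c i = a ⟨i, h⟩ := dif_pos h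

lemma merge_apply_of_notMem (a : SubCfg d S) (c : CoCfg d S) {i : ι} (h : i ∉ S) :
    merge d S a c i = c ⟨i, h⟩ := dif_neg h

lemma merge_restrict {x : Cfg d} {a : SubCfg d S} (hx : ∀ i : S, x i = a i) :
    merge d S a (fun i => x i) = x := by
  funext i
  by_cases h : i ∈ S
  · exact (merge_apply_of_mem _ _ h).trans (hx ⟨i, h⟩).symm
  · exact merge_apply_of_notMem _ _ h

lemma merge_left_injective (c : CoCfg d S) : Function.Injective fun a => merge d S a c :=
  fun a b hab => funext fun i => by
    simpa only [merge_apply_of_mem _ _ i.2] using congrFun hab i.1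

variable [Fintype ι]

lemma hammingDist_merge_le (a b : SubCfg d S) (c : CoCfg d S) :
    hammingDist (merge d S a c) (merge d S b c) ≤ #S := by
  refine card_le_card fun i hi => ?_
  by_contra h
  simp [merge_apply_of_notMem _ _ h] at hi

lemma card_merge_mem (C : Finset (Cfg d)) (a : SubCfg d S) :
    #{c : CoCfg d S | merge d S a c ∈ C} = #{x ∈ C | ∀ i : S, x i = a i} := by
  refine card_bij' (fun c _ => merge d S a c) (fun x _ i => x i.1) ?_ ?_ ?_ ?_
  · intro c hc
    simp only [mem_filter, mem_univ, true_and] at hc ⊢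
    exact ⟨hc, fun i => merge_apply_of_mem _ _ i.2⟩
  · intro x hx
    simp only [mem_filter, mem_univ, true_and] at hx ⊢
    rw [merge_restrict hx.2]
    exact hx.1
  · intro c _
    funext i
    exact merge_apply_of_notMem _ _ i.2
  · intro x hx
    exact merge_restrict (mem_filter.1 hx).2

end merge

variable [Fintype ι]

/-- Orthogonal array of strength `r`, with the index `#C / ∏ dᵢ` written multiplicatively to
avoid `ℕ`-division. -/
def IsOrthogonalArray (d : ι → ℕ) (r : ℕ) (C : Finset (Cfg d)) : Prop :=
  ∀ S : Finset ι, #S = r → ∀ a : SubCfg d S,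
    #{x ∈ C | ∀ i : S, x i = a i} * ∏ i : S, d i = #C

noncomputable def codeState (C : Finset (Cfg d)) : H d :=
  fun x => if x ∈ C then ((√(#C : ℝ))⁻¹ : ℝ) else 0

lemma codeState_mul_conj (C : Finset (Cfg d)) (x y : Cfg d) :
    codeState C x * conj (codeState C y) = if x ∈ C ∧ y ∈ C then (#C : ℂ)⁻¹ else 0 := by
  unfold codeState
  split_ifs <;> simp_all [← Complex.ofReal_mul, ← mul_inv, Real.mul_self_sqrt]

variable [DecidableEq ι]

theorem isUnitVec_codeState {C : Finset (Cfg d)} (hC : C.Nonempty) :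
    IsUnitVec d (codeState C) := by
  unfold IsUnitVec dotc
  simp_rw [mul_comm (conj _), codeState_mul_conj, and_self, sum_ite_mem, univ_inter,
    sum_const, nsmul_eq_mul]
  exact mul_inv_cancel₀ (by simpa using hC.ne_empty)

lemma ptr_dyad_codeState (C : Finset (Cfg d)) (S : Finset ι) (a b : SubCfg d S) :
    ptr d S (dyad d (codeState C) (codeState C)) a b =
      (#C : ℂ)⁻¹ * #{c : CoCfg d S | merge d S a c ∈ C ∧ merge d S b c ∈ C} := by
  simp only [ptr, dyad, Matrix.of_apply, codeState_mul_conj]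
  rw [sum_ite, sum_const_zero, add_zero, sum_const, nsmul_eq_mul, mul_comm]

theorem isUniform_codeState {r : ℕ} {C : Finset (Cfg d)} (hC : C.Nonempty)
    (hdist : ∀ x ∈ C, ∀ y ∈ C, x ≠ y → r < hammingDist x y) (hOA : IsOrthogonalArray d r C) :
    IsUniform d r (codeState C) := by
  intro S hS
  ext a b
  rw [ptr_dyad_codeState, unifMix, Matrix.smul_apply, Matrix.one_apply, smul_eq_mul]
  split_ifs with hab
  · subst hab
    have hcount := congrArg (Nat.cast (R := ℂ)) (hOA S hS a)
    push_cast at hcount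
    have hC0 : (#C : ℂ) ≠ 0 := by simpa using hC.ne_empty
    have hprod : ∏ i : S, (d i : ℂ) ≠ 0 := fun h => hC0 (by rw [← hcount, h, mul_zero])
    simp_rw [and_self, card_merge_mem, mul_one]
    rw [inv_mul_eq_iff_eq_mul₀ hC0, ← hcount, mul_inv_cancel_right₀ hprod]
  · have hempty (c : CoCfg d S) : ¬(merge d S a c ∈ C ∧ merge d S b c ∈ C) := fun ⟨ha, hb⟩ =>
      (hdist _ ha _ hb ((merge_left_injective c).ne hab)).not_ge (hS ▸ hammingDist_merge_le a b c)
    simp [hempty]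

/-- The code `[8, 4, 4]₂`, i.e. the Reed–Muller code `RM(1, 3)`. -/
def extHammingCode : Finset (Cfg fun _ : Fin 8 => 2) :=
  {![0,0,0,0,0,0,0,0], ![0,0,0,0,1,1,1,1], ![0,0,1,1,0,0,1,1], ![0,0,1,1,1,1,0,0],
   ![0,1,0,1,0,1,0,1], ![0,1,0,1,1,0,1,0], ![0,1,1,0,0,1,1,0], ![0,1,1,0,1,0,0,1],
   ![1,1,1,1,1,1,1,1], ![1,1,1,1,0,0,0,0], ![1,1,0,0,1,1,0,0], ![1,1,0,0,0,0,1,1],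
   ![1,0,1,0,1,0,1,0], ![1,0,1,0,0,1,0,1], ![1,0,0,1,1,0,0,1], ![1,0,0,1,0,1,1,0]}

lemma extHammingCode_nonempty : extHammingCode.Nonempty := ⟨0, by decide⟩

set_option maxRecDepth 100000 in
lemma lt_hammingDist_of_mem_extHammingCode :
    ∀ x ∈ extHammingCode, ∀ y ∈ extHammingCode, x ≠ y → 3 < hammingDist x y := by
  decide

set_option maxRecDepth 100000 in
lemma card_filter_extHammingCode :
    ∀ S ∈ univ.powersetCard 3, ∀ a : SubCfg (fun _ : Fin 8 => 2) S,
      #{x ∈ extHammingCode | ∀ i : S, x i = a i} * 2 ^ 3 = #extHammingCode := by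
  decide

lemma isOrthogonalArray_extHammingCode :
    IsOrthogonalArray (fun _ : Fin 8 => 2) 3 extHammingCode := by
  intro S hS a
  rw [prod_const, card_univ, Fintype.card_coe, hS]
  exact card_filter_extHammingCode S (mem_powersetCard.2 ⟨subset_univ S, hS⟩) a

end RUnif

open RUnif in
/-- There exists a 3-uniform unit vector of 8 qubits, i.e. a pure
quantum error correcting code `((8, 1, 4))₂`. -/
theorem statement15 :
    ∃ ψ : H (fun _ : Fin 8 => 2),
      IsUnitVec (fun _ : Fin 8 => 2) ψ ∧ IsUniform (fun _ : Fin 8 => 2) 3 ψ :=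
  ⟨codeState extHammingCode, isUnitVec_codeState extHammingCode_nonempty,
    isUniform_codeState extHammingCode_nonempty lt_hammingDist_of_mem_extHammingCode
      isOrthogonalArray_extHammingCode⟩
end

section
/- There exists a 2-uniform unit vector in the 8-partite space (C^3)^{⊗4} ⊗ (C^2)^{⊗4}, i.e., a unit vector whose reductions to any 2 of the 8 parties (four qutrits and four qubits) are maximally mixed. More generally, for every integer N ≥ 4 there exists a 2-uniform unit vector in (C^3)^{⊗4} ⊗ (C^2)^{⊗N}. -/
/-!
Common definitions: multipartite systems with parties indexed by a finite type `ι`,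
local dimensions `d : ι → ℕ`, vectors as functions on the configuration space,
partial traces, and `r`-uniform states and subspaces.
-/

open scoped ComplexConjugate Matrix

namespace RUnif

variable {ι : Type} [Fintype ι] [DecidableEq ι]

/-- Strength-1 (balancedness of single coordinates) of a code. -/
abbrev Str1 (d : ι → ℕ) (C : Finset (Cfg d)) : Prop :=
  ∀ i : ι, ∀ a : Fin (d i), (C.filter (fun x => x i = a)).card * d i = C.card

/-- Strength-2 (balancedness of pairs of coordinates) of a code. -/
abbrev Str2 (d : ι → ℕ) (C : Finset (Cfg d)) : Prop :=
  ∀ i j : ι, i ≠ j → ∀ (a : Fin (d i)) (b : Fin (d j)),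
    (C.filter (fun x => x i = a ∧ x j = b)).card * (d i * d j) = C.card

/-- Minimal Hamming distance at least 3. -/
abbrev Dst3 (d : ι → ℕ) (C : Finset (Cfg d)) : Prop :=
  ∀ x ∈ C, ∀ y ∈ C, x ≠ y → 3 ≤ (Finset.univ.filter (fun k => x k ≠ y k)).card

/-- A good code: nonempty, strength 1 and 2, minimum distance 3. -/
abbrev GoodCode (d : ι → ℕ) (C : Finset (Cfg d)) : Prop :=
  C.Nonempty ∧ Str1 d C ∧ Str2 d C ∧ Dst3 d C

theorem goodCode_of_list (d : ι → ℕ) (L : List (Cfg d)) (hne : L ≠ [])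
    (h1 : Str1 d L.toFinset) (h2 : Str2 d L.toFinset)
    (h3 : L.Pairwise (fun x y => 3 ≤ (Finset.univ.filter (fun k => x k ≠ y k)).card)) :
    GoodCode d L.toFinset := by
  refine ⟨?_, h1, h2, ?_⟩
  · rcases L with _ | ⟨a, L⟩
    · exact absurd rfl hne
    · exact ⟨a, by simp⟩
  · intro x hx y hy hxy
    rw [List.mem_toFinset] at hx hy
    have hsymm : Symmetric (fun x y : Cfg d =>
        3 ≤ (Finset.univ.filter (fun k => x k ≠ y k)).card) := by
      intro u v huv
      have he : (Finset.univ.filter (fun k => v k ≠ u k))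
          = (Finset.univ.filter (fun k => u k ≠ v k)) := by
        apply Finset.filter_congr; intro k _; exact ne_comm
      rwa [he]
    have : Std.Symm (fun x y : Cfg d =>
        3 ≤ (Finset.univ.filter (fun k => x k ≠ y k)).card) := ⟨fun _ _ h => hsymm h⟩
    exact h3.forall hx hy hxy

/-- Main lemma: a good code of minimum distance 3 and strength 2 gives a
2-uniform unit vector. -/
theorem exists_uniform_of_goodCode {d : ι → ℕ} {C : Finset (Cfg d)}
    (h : GoodCode d C) :
    ∃ ψ : H d, IsUnitVec d ψ ∧ IsUniform d 2 ψ := by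
  obtain ⟨hne, _h1, h2, h3⟩ := h
  have hKpos : 0 < C.card := Finset.card_pos.mpr hne
  have hKne : (C.card : ℂ) ≠ 0 := Nat.cast_ne_zero.mpr hKpos.ne'
  set α : ℂ := ((Real.sqrt C.card : ℝ) : ℂ)⁻¹ with hα
  have hconj : (starRingEnd ℂ) α = α := by
    rw [hα, map_inv₀, Complex.conj_ofReal]
  have hmul : α * α = (C.card : ℂ)⁻¹ := by
    rw [hα, ← mul_inv, ← Complex.ofReal_mul,
      Real.mul_self_sqrt (Nat.cast_nonneg _), Complex.ofReal_natCast]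
  set ψ : H d := fun x => if x ∈ C then α else 0 with hψ
  have hψval : ∀ x : Cfg d, ψ x = if x ∈ C then α else 0 := fun x => rfl
  refine ⟨ψ, ?_, ?_⟩
  · -- unit vector
    unfold IsUnitVec dotc
    have hpt : ∀ x : Cfg d, conj (ψ x) * ψ x = if x ∈ C then (C.card : ℂ)⁻¹ else 0 := by
      intro x
      by_cases hx : x ∈ C
      · rw [hψval, if_pos hx, if_pos hx, hconj, hmul]
      · rw [hψval, if_neg hx, if_neg hx, map_zero, mul_zero]
    rw [Finset.sum_congr rfl (fun x _ => hpt x), Finset.sum_ite_mem, Finset.univ_inter,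
      Finset.sum_const, nsmul_eq_mul, mul_inv_cancel₀ hKne]
  · -- 2-uniform
    intro S hS
    obtain ⟨i, j, hij, rfl⟩ := Finset.card_eq_two.mp hS
    have hiS : i ∈ ({i, j} : Finset ι) := Finset.mem_insert_self _ _
    have hjS : j ∈ ({i, j} : Finset ι) := Finset.mem_insert_of_mem (Finset.mem_singleton_self _)
    have hprod : (∏ k : ({i, j} : Finset ι), (d k.1 : ℂ)) = (d i : ℂ) * d j := by
      rw [Finset.prod_coe_sort (f := fun k => (d k : ℂ)),
        Finset.prod_insert (by simp [hij]), Finset.prod_singleton]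
    ext a b
    simp only [ptr, dyad, unifMix, Matrix.of_apply, Matrix.smul_apply, smul_eq_mul]
    by_cases hab : a = b
    · -- diagonal entry
      subst hab
      rw [Matrix.one_apply_eq, mul_one, hprod]
      have hpt : ∀ c : CoCfg d {i, j},
          ψ (merge d {i, j} a c) * conj (ψ (merge d {i, j} a c))
            = if merge d {i, j} a c ∈ C then (C.card : ℂ)⁻¹ else 0 := by
        intro c
        by_cases hm : merge d {i, j} a c ∈ C
        · rw [hψval, if_pos hm, if_pos hm, hconj, hmul]
        · rw [hψval, if_neg hm, if_neg hm, map_zero, mul_zero]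
      rw [Finset.sum_congr rfl (fun c _ => hpt c), Finset.sum_ite, Finset.sum_const_zero,
        add_zero, Finset.sum_const, nsmul_eq_mul]
      have hbij : (Finset.univ.filter fun c : CoCfg d {i, j} => merge d {i, j} a c ∈ C).card
          = (C.filter fun x => x i = a ⟨i, hiS⟩ ∧ x j = a ⟨j, hjS⟩).card := by
        apply Finset.card_bij (fun c _ => merge d {i, j} a c)
        · intro c hc
          rw [Finset.mem_filter] at hc ⊢
          refine ⟨hc.2, ?_, ?_⟩
          · show merge d {i, j} a c i = a ⟨i, hiS⟩
            simp [merge, hiS]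
          · show merge d {i, j} a c j = a ⟨j, hjS⟩
            simp [merge, hjS]
        · intro c1 h1' c2 h2' hcc
          funext k
          simpa [merge, k.2] using congrFun hcc k.1
        · intro x hx
          rw [Finset.mem_filter] at hx
          have hmx : merge d {i, j} a (fun k => x k.1) = x := by
            funext l
            show (if h : l ∈ ({i, j} : Finset ι) then a ⟨l, h⟩
              else (fun k : {m : ι // m ∉ ({i, j} : Finset ι)} => x k.1) ⟨l, h⟩) = x l
            by_cases hl : l ∈ ({i, j} : Finset ι)
            · rw [dif_pos hl]
              rcases Finset.mem_insert.mp hl with hli | hlj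
              · subst hli; exact hx.2.1.symm
              · rw [Finset.mem_singleton] at hlj; subst hlj; exact hx.2.2.symm
            · rw [dif_neg hl]
          exact ⟨fun k => x k.1,
            Finset.mem_filter.mpr ⟨Finset.mem_univ _, by rw [hmx]; exact hx.1⟩, hmx⟩
      rw [hbij]
      have hcnt := h2 i j hij (a ⟨i, hiS⟩) (a ⟨j, hjS⟩)
      have hcc : ((C.filter fun x => x i = a ⟨i, hiS⟩ ∧ x j = a ⟨j, hjS⟩).card : ℂ)
          * ((d i : ℂ) * (d j : ℂ)) = (C.card : ℂ) := by exact_mod_cast hcnt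
      have hdd : ((d i : ℂ) * (d j : ℂ)) ≠ 0 := by
        intro h0
        rw [h0, mul_zero] at hcc
        exact hKne hcc.symm
      have hdi : (d i : ℂ) ≠ 0 := left_ne_zero_of_mul hdd
      have hdj : (d j : ℂ) ≠ 0 := right_ne_zero_of_mul hdd
      field_simp
      linear_combination hcc
    · -- off-diagonal entry
      rw [Matrix.one_apply_ne hab, mul_zero]
      apply Finset.sum_eq_zero
      intro c _
      by_cases hma : merge d {i, j} a c ∈ C
      · by_cases hmb : merge d {i, j} b c ∈ C
        · exfalso
          have heq : merge d {i, j} a c = merge d {i, j} b c := by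
            by_contra hne'
            have h3' := h3 _ hma _ hmb hne'
            have hsub : (Finset.univ.filter fun k =>
                merge d {i, j} a c k ≠ merge d {i, j} b c k) ⊆ {i, j} := by
              intro k hk
              rw [Finset.mem_filter] at hk
              by_contra hk2
              exact hk.2 (by simp [merge, hk2])
            have hle := Finset.card_le_card hsub
            rw [hS] at hle
            omega
          exact hab (funext fun k => by simpa [merge, k.2] using congrFun heq k.1)
        · rw [hψval (merge d {i, j} b c), if_neg hmb, map_zero, mul_zero]
      · rw [hψval (merge d {i, j} a c), if_neg hma, zero_mul]

end RUnif

namespace RUnif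

variable {ι₁ ι₂ : Type} [Fintype ι₁] [DecidableEq ι₁] [Fintype ι₂] [DecidableEq ι₂]
  {d₁ : ι₁ → ℕ} {d₂ : ι₂ → ℕ}

/-- Glue configurations of two systems. -/
def glue (x₁ : Cfg d₁) (x₂ : Cfg d₂) : Cfg (Sum.elim d₁ d₂) := fun i =>
  match i with
  | .inl a => x₁ a
  | .inr b => x₂ b

theorem glue_injective :
    Function.Injective (fun p : Cfg d₁ × Cfg d₂ => glue p.1 p.2) := by
  intro p q hpq
  exact Prod.ext (funext fun a => congrFun hpq (Sum.inl a))
    (funext fun b => congrFun hpq (Sum.inr b))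

/-- Product (concatenation) of two codes. -/
def prodCode (C₁ : Finset (Cfg d₁)) (C₂ : Finset (Cfg d₂)) :
    Finset (Cfg (Sum.elim d₁ d₂)) :=
  (C₁ ×ˢ C₂).map ⟨fun p => glue p.1 p.2, glue_injective⟩

theorem filter_prodCode_card (C₁ : Finset (Cfg d₁)) (C₂ : Finset (Cfg d₂))
    (Q : Cfg d₁ → Prop) (R : Cfg d₂ → Prop) [DecidablePred Q] [DecidablePred R]
    (P : Cfg (Sum.elim d₁ d₂) → Prop) [DecidablePred P]
    (hP : ∀ x₁ x₂, P (glue x₁ x₂) ↔ Q x₁ ∧ R x₂) :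
    ((prodCode C₁ C₂).filter P).card = (C₁.filter Q).card * (C₂.filter R).card := by
  rw [prodCode, Finset.filter_map, Finset.card_map]
  simp only [Function.Embedding.coeFn_mk]
  have he : (C₁ ×ˢ C₂).filter (P ∘ fun p => glue p.1 p.2)
      = (C₁.filter Q) ×ˢ (C₂.filter R) := by
    ext p
    simp only [Finset.mem_filter, Finset.mem_product, Function.comp_apply, hP p.1 p.2]
    tauto
  rw [he, Finset.card_product]

theorem card_prodCode (C₁ : Finset (Cfg d₁)) (C₂ : Finset (Cfg d₂)) :
    (prodCode C₁ C₂).card = C₁.card * C₂.card := by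
  rw [prodCode, Finset.card_map, Finset.card_product]

theorem goodCode_prodCode {C₁ : Finset (Cfg d₁)} {C₂ : Finset (Cfg d₂)}
    (h₁ : GoodCode d₁ C₁) (h₂ : GoodCode d₂ C₂) :
    GoodCode (Sum.elim d₁ d₂) (prodCode C₁ C₂) := by
  obtain ⟨hne₁, hs1₁, hs2₁, hd₁⟩ := h₁
  obtain ⟨hne₂, hs1₂, hs2₂, hd₂⟩ := h₂
  refine ⟨?_, ?_, ?_, ?_⟩
  · obtain ⟨x₁, hx₁⟩ := hne₁
    obtain ⟨x₂, hx₂⟩ := hne₂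
    exact ⟨glue x₁ x₂,
      Finset.mem_map.mpr ⟨(x₁, x₂), Finset.mem_product.mpr ⟨hx₁, hx₂⟩, rfl⟩⟩
  · -- Str1
    rintro (a | b) v
    · letI : DecidablePred (fun x : Cfg d₁ => x a = v) := fun x => instDecidableEqFin _ (x a) v
      rw [filter_prodCode_card C₁ C₂ (fun x => x a = v) (fun _ => True) _
        (fun x₁ x₂ => by simp [glue]), Finset.filter_true, card_prodCode]
      show _ * d₁ a = _
      rw [mul_right_comm]; exact congrArg (· * C₂.card) (hs1₁ a v)
    · letI : DecidablePred (fun x : Cfg d₂ => x b = v) := fun x => instDecidableEqFin _ (x b) v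
      rw [filter_prodCode_card C₁ C₂ (fun _ => True) (fun x => x b = v) _
        (fun x₁ x₂ => by simp [glue]), Finset.filter_true, card_prodCode]
      show _ * d₂ b = _
      rw [mul_assoc]; exact congrArg (C₁.card * ·) (hs1₂ b v)
  · -- Str2
    rintro (a | b) (a' | b') hij v w
    · have haa : a ≠ a' := fun h => hij (by rw [h])
      letI : DecidablePred (fun x : Cfg d₁ => x a = v ∧ x a' = w) := fun x =>
        @instDecidableAnd _ _ (instDecidableEqFin _ (x a) v) (instDecidableEqFin _ (x a') w)
      rw [filter_prodCode_card C₁ C₂ (fun x => x a = v ∧ x a' = w) (fun _ => True) _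
        (fun x₁ x₂ => by simp [glue]), Finset.filter_true, card_prodCode]
      show _ * (d₁ a * d₁ a') = _
      rw [mul_right_comm]; exact congrArg (· * C₂.card) (hs2₁ a a' haa v w)
    · letI : DecidablePred (fun x : Cfg d₁ => x a = v) := fun x => instDecidableEqFin _ (x a) v
      letI : DecidablePred (fun x : Cfg d₂ => x b' = w) := fun x => instDecidableEqFin _ (x b') w
      rw [filter_prodCode_card C₁ C₂ (fun x => x a = v) (fun x => x b' = w) _
        (fun x₁ x₂ => by simp [glue]), card_prodCode]
      show _ * (d₁ a * d₂ b') = _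
      rw [mul_mul_mul_comm]; exact congrArg₂ (· * ·) (hs1₁ a v) (hs1₂ b' w)
    · letI : DecidablePred (fun x : Cfg d₁ => x a' = w) := fun x => instDecidableEqFin _ (x a') w
      letI : DecidablePred (fun x : Cfg d₂ => x b = v) := fun x => instDecidableEqFin _ (x b) v
      rw [filter_prodCode_card C₁ C₂ (fun x => x a' = w) (fun x => x b = v) _
        (fun x₁ x₂ => by simp [glue, and_comm]), card_prodCode]
      show _ * (d₂ b * d₁ a') = _
      rw [mul_comm (d₂ b) (d₁ a'), mul_mul_mul_comm]; exact congrArg₂ (· * ·) (hs1₁ a' w) (hs1₂ b v)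
    · have hbb : b ≠ b' := fun h => hij (by rw [h])
      letI : DecidablePred (fun x : Cfg d₂ => x b = v ∧ x b' = w) := fun x =>
        @instDecidableAnd _ _ (instDecidableEqFin _ (x b) v) (instDecidableEqFin _ (x b') w)
      rw [filter_prodCode_card C₁ C₂ (fun _ => True) (fun x => x b = v ∧ x b' = w) _
        (fun x₁ x₂ => by simp [glue]), Finset.filter_true, card_prodCode]
      show _ * (d₂ b * d₂ b') = _
      rw [mul_assoc]; exact congrArg (C₁.card * ·) (hs2₂ b b' hbb v w)
  · -- Dst3
    intro x hx y hy hxy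
    obtain ⟨⟨x₁, x₂⟩, hxm, rfl⟩ := Finset.mem_map.mp hx
    obtain ⟨⟨y₁, y₂⟩, hym, rfl⟩ := Finset.mem_map.mp hy
    rw [Finset.mem_product] at hxm hym
    simp only [Function.Embedding.coeFn_mk] at hxy ⊢
    have hsplit : (Finset.univ.filter fun k : ι₁ ⊕ ι₂ =>
        glue x₁ x₂ k ≠ glue y₁ y₂ k).card
        = (Finset.univ.filter fun a => x₁ a ≠ y₁ a).card
          + (Finset.univ.filter fun b => x₂ b ≠ y₂ b).card := by
      rw [Finset.card_filter, Finset.card_filter, Finset.card_filter,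
        Fintype.sum_sum_type]
      rfl
    rw [hsplit]
    by_cases h1 : x₁ = y₁
    · have h2 : x₂ ≠ y₂ := by
        intro h2
        exact hxy (by rw [h1, h2])
      have := hd₂ x₂ hxm.2 y₂ hym.2 h2
      omega
    · have := hd₁ x₁ hxm.1 y₁ hym.1 h1
      omega

end RUnif

namespace RUnif

variable {ι κ : Type} [Fintype ι] [DecidableEq ι] [Fintype κ] [DecidableEq κ]

/-- Transport a configuration along a relabeling of the parties. -/
def relabelFun (e : ι ≃ κ) (d : ι → ℕ) (d' : κ → ℕ) (h : ∀ j, d (e.symm j) = d' j)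
    (x : Cfg d) : Cfg d' := fun j => Fin.cast (h j) (x (e.symm j))

theorem relabelFun_injective (e : ι ≃ κ) (d : ι → ℕ) (d' : κ → ℕ)
    (h : ∀ j, d (e.symm j) = d' j) : Function.Injective (relabelFun e d d' h) := by
  intro x y hxy
  funext i
  have h1 : (x (e.symm (e i))).val = (y (e.symm (e i))).val := by
    have := congrFun hxy (e i)
    simpa [relabelFun, Fin.ext_iff] using this
  rw [Equiv.symm_apply_apply] at h1
  exact Fin.ext h1

/-- Transport a code along a relabeling of the parties. -/
def relabelCode (e : ι ≃ κ) (d : ι → ℕ) (d' : κ → ℕ) (h : ∀ j, d (e.symm j) = d' j)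
    (C : Finset (Cfg d)) : Finset (Cfg d') :=
  C.map ⟨relabelFun e d d' h, relabelFun_injective e d d' h⟩

theorem goodCode_relabel (e : ι ≃ κ) (d : ι → ℕ) (d' : κ → ℕ)
    (h : ∀ j, d (e.symm j) = d' j) {C : Finset (Cfg d)} (hC : GoodCode d C) :
    GoodCode d' (relabelCode e d d' h C) := by
  obtain ⟨hne, hs1, hs2, hd3⟩ := hC
  have hcastiff : ∀ (j : κ) (v : Fin (d (e.symm j))) (w : Fin (d' j)),
      Fin.cast (h j) v = w ↔ v = Fin.cast (h j).symm w := by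
    intro j v w
    rw [Fin.ext_iff, Fin.ext_iff]
    simp
  refine ⟨hne.map, ?_, ?_, ?_⟩
  · -- Str1
    intro i a
    obtain ⟨av, hav⟩ := a
    rw [relabelCode, Finset.filter_map, Finset.card_map, Finset.card_map]
    simp only [Function.Embedding.coeFn_mk]
    have he : (C.filter ((fun x : Cfg d' => x i = ⟨av, hav⟩) ∘ relabelFun e d d' h))
        = C.filter (fun x => (x (e.symm i)).val = av) := by
      apply Finset.filter_congr
      intro x _
      show Fin.cast (h i) (x (e.symm i)) = ⟨av, hav⟩ ↔ _
      rw [Fin.ext_iff]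
      simp
    have hs := hs1 (e.symm i) ⟨av, by rw [h i]; exact hav⟩
    have he2 : C.filter (fun x => x (e.symm i) = ⟨av, by rw [h i]; exact hav⟩)
        = C.filter (fun x => (x (e.symm i)).val = av) := by
      apply Finset.filter_congr
      intro x _
      rw [Fin.ext_iff]
    rw [he2] at hs
    rw [he, ← h i]
    exact hs
  · -- Str2
    intro i j hij a b
    obtain ⟨av, hav⟩ := a
    obtain ⟨bv, hbv⟩ := b
    rw [relabelCode, Finset.filter_map, Finset.card_map, Finset.card_map]
    simp only [Function.Embedding.coeFn_mk]
    have he : (C.filter ((fun x : Cfg d' => x i = ⟨av, hav⟩ ∧ x j = ⟨bv, hbv⟩)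
          ∘ relabelFun e d d' h))
        = C.filter (fun x => (x (e.symm i)).val = av ∧ (x (e.symm j)).val = bv) := by
      apply Finset.filter_congr
      intro x _
      show (Fin.cast (h i) (x (e.symm i)) = ⟨av, hav⟩
        ∧ Fin.cast (h j) (x (e.symm j)) = ⟨bv, hbv⟩) ↔ _
      rw [Fin.ext_iff, Fin.ext_iff]
      simp
    have hne' : e.symm i ≠ e.symm j := fun hh => hij (e.symm.injective hh)
    have hs := hs2 (e.symm i) (e.symm j) hne' ⟨av, by rw [h i]; exact hav⟩
      ⟨bv, by rw [h j]; exact hbv⟩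
    have he2 : C.filter (fun x => x (e.symm i) = ⟨av, by rw [h i]; exact hav⟩
          ∧ x (e.symm j) = ⟨bv, by rw [h j]; exact hbv⟩)
        = C.filter (fun x => (x (e.symm i)).val = av ∧ (x (e.symm j)).val = bv) := by
      apply Finset.filter_congr
      intro x _
      rw [Fin.ext_iff, Fin.ext_iff]
    rw [he2] at hs
    rw [he, ← h i, ← h j]
    exact hs
  · -- Dst3
    intro x' hx' y' hy' hxy'
    obtain ⟨x, hx, rfl⟩ := Finset.mem_map.mp hx'
    obtain ⟨y, hy, rfl⟩ := Finset.mem_map.mp hy'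
    simp only [Function.Embedding.coeFn_mk] at hxy' ⊢
    have hxy : x ≠ y := fun hh => hxy' (by rw [hh])
    have hcard : (Finset.univ.filter fun k => x k ≠ y k).card
        = (Finset.univ.filter fun k' =>
            relabelFun e d d' h x k' ≠ relabelFun e d d' h y k').card := by
      apply Finset.card_bij (fun k _ => e k)
      · intro k hk
        rw [Finset.mem_filter] at hk ⊢
        refine ⟨Finset.mem_univ _, ?_⟩
        intro hcontra
        apply hk.2
        have h1 : (x (e.symm (e k))).val = (y (e.symm (e k))).val := by
          simpa [relabelFun, Fin.ext_iff] using hcontra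
        rw [Equiv.symm_apply_apply] at h1
        exact Fin.ext h1
      · intro k1 _ k2 _ hkk
        exact e.injective hkk
      · intro k' hk'
        rw [Finset.mem_filter] at hk'
        refine ⟨e.symm k', Finset.mem_filter.mpr ⟨Finset.mem_univ _, ?_⟩,
          e.apply_symm_apply k'⟩
        intro hcontra
        apply hk'.2
        show Fin.cast (h k') (x (e.symm k')) = Fin.cast (h k') (y (e.symm k'))
        rw [hcontra]
    rw [← hcard]
    exact hd3 x hx y hy hxy

end RUnif

namespace RUnif

def M4list : List (Cfg (Sum.elim (fun _ : Fin 4 => 3) (fun _ : Fin 4 => 2))) := [glue ![0,0,0,0] ![0,0,0,0], glue ![0,1,1,2] ![0,0,0,0], glue ![0,2,2,1] ![0,0,0,0], glue ![1,0,1,1] ![0,0,0,0], glue ![1,1,2,0] ![0,0,0,0], glue ![1,2,0,2] ![0,0,0,0], glue ![2,0,2,2] ![0,0,0,0], glue ![2,1,0,1] ![0,0,0,0], glue ![2,2,1,0] ![0,0,0,0], glue ![0,0,0,1] ![0,0,1,1], glue ![0,1,1,0] ![0,0,1,1], glue ![0,2,2,2] ![0,0,1,1], glue ![1,0,1,2]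 ![0,0,1,1], glue ![1,1,2,1] ![0,0,1,1], glue ![1,2,0,0] ![0,0,1,1], glue ![2,0,2,0] ![0,0,1,1], glue ![2,1,0,2] ![0,0,1,1], glue ![2,2,1,1] ![0,0,1,1], glue ![0,0,0,2] ![0,1,0,1], glue ![0,1,1,1] ![0,1,0,1], glue ![0,2,2,0] ![0,1,0,1], glue ![1,0,1,0] ![0,1,0,1], glue ![1,1,2,2] ![0,1,0,1], glue ![1,2,0,1] ![0,1,0,1], glue ![2,0,2,1] ![0,1,0,1], glue ![2,1,0,0] ![0,1,0,1], glue ![2,2,1,2] ![0,1,0,1], glue ![0,0,1,0] ![0,1,1,0], glue ![0,1,2,2] ![0,1,1,0], glue ![0,2,0,1] ![0,1,1,0], glue ![1,0,2,1] ![0,1,1,0], glue ![1,1,0,0] ![0,1,1,0], glue ![1,2,1,2] ![0,1,1,0], glue ![2,0,0,2] ![0,1,1,0], glue ![2,1,1,1] ![0,1,1,0], glue ![2,2,2,0] ![0,1,1,0], glue ![0,0,1,1] ![1,0,0,1], glue ![0,1,2,0] ![1,0,0,1], glue ![0,2,0,2] ![1,0,0,1], glue ![1,0,2,2] ![1,0,0,1],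 glue ![1,1,0,1] ![1,0,0,1], glue ![1,2,1,0] ![1,0,0,1], glue ![2,0,0,0] ![1,0,0,1], glue ![2,1,1,2] ![1,0,0,1], glue ![2,2,2,1] ![1,0,0,1], glue ![0,0,1,2] ![1,0,1,0], glue ![0,1,2,1] ![1,0,1,0], glue ![0,2,0,0] ![1,0,1,0], glue ![1,0,2,0] ![1,0,1,0], glue ![1,1,0,2] ![1,0,1,0], glue ![1,2,1,1] ![1,0,1,0], glue ![2,0,0,1] ![1,0,1,0], glue ![2,1,1,0] ![1,0,1,0], glue ![2,2,2,2] ![1,0,1,0], glue ![0,0,2,0] ![1,1,0,0], glue ![0,1,0,2] ![1,1,0,0], glue ![0,2,1,1] ![1,1,0,0], glue ![1,0,0,1] ![1,1,0,0], glue ![1,1,1,0] ![1,1,0,0], glue ![1,2,2,2] ![1,1,0,0], glue ![2,0,1,2] ![1,1,0,0], glue ![2,1,2,1] ![1,1,0,0], glue ![2,2,0,0] ![1,1,0,0], glue ![0,0,2,1] ![1,1,1,1], glue ![0,1,0,0] ![1,1,1,1], glue ![0,2,1,2] ![1,1,1,1], glue ![1,0,0,2] ![1,1,1,1], glue ![1,1,1,1]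 ![1,1,1,1], glue ![1,2,2,0] ![1,1,1,1], glue ![2,0,1,0] ![1,1,1,1], glue ![2,1,2,2] ![1,1,1,1], glue ![2,2,0,1] ![1,1,1,1]]

def M5list : List (Cfg (Sum.elim (fun _ : Fin 4 => 3) (fun _ : Fin 5 => 2))) := [glue ![0,0,0,0] ![0,0,0,0,0], glue ![0,1,1,2] ![0,0,0,0,0], glue ![0,2,2,1] ![0,0,0,0,0], glue ![1,0,1,1] ![0,0,0,0,0], glue ![1,1,2,0] ![0,0,0,0,0], glue ![1,2,0,2] ![0,0,0,0,0], glue ![2,0,2,2] ![0,0,0,0,0], glue ![2,1,0,1] ![0,0,0,0,0], glue ![2,2,1,0] ![0,0,0,0,0], glue ![0,0,0,1] ![0,0,1,0,1], glue ![0,1,1,0] ![0,0,1,0,1], glue ![0,2,2,2] ![0,0,1,0,1], glue ![1,0,1,2] ![0,0,1,0,1], glue ![1,1,2,1] ![0,0,1,0,1], glue ![1,2,0,0] ![0,0,1,0,1], glue ![2,0,2,0] ![0,0,1,0,1], glue ![2,1,0,2] ![0,0,1,0,1], glue ![2,2,1,1] ![0,0,1,0,1], glue ![0,0,0,2] ![0,1,0,1,0],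 glue ![0,1,1,1] ![0,1,0,1,0], glue ![0,2,2,0] ![0,1,0,1,0], glue ![1,0,1,0] ![0,1,0,1,0], glue ![1,1,2,2] ![0,1,0,1,0], glue ![1,2,0,1] ![0,1,0,1,0], glue ![2,0,2,1] ![0,1,0,1,0], glue ![2,1,0,0] ![0,1,0,1,0], glue ![2,2,1,2] ![0,1,0,1,0], glue ![0,0,1,0] ![0,1,1,1,1], glue ![0,1,2,2] ![0,1,1,1,1], glue ![0,2,0,1] ![0,1,1,1,1], glue ![1,0,2,1] ![0,1,1,1,1], glue ![1,1,0,0] ![0,1,1,1,1], glue ![1,2,1,2] ![0,1,1,1,1], glue ![2,0,0,2] ![0,1,1,1,1], glue ![2,1,1,1] ![0,1,1,1,1], glue ![2,2,2,0] ![0,1,1,1,1], glue ![0,0,1,1] ![1,0,0,1,1], glue ![0,1,2,0] ![1,0,0,1,1], glue ![0,2,0,2] ![1,0,0,1,1], glue ![1,0,2,2] ![1,0,0,1,1], glue ![1,1,0,1] ![1,0,0,1,1], glue ![1,2,1,0] ![1,0,0,1,1], glue ![2,0,0,0] ![1,0,0,1,1], glue ![2,1,1,2] ![1,0,0,1,1],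 glue ![2,2,2,1] ![1,0,0,1,1], glue ![0,0,1,2] ![1,0,1,1,0], glue ![0,1,2,1] ![1,0,1,1,0], glue ![0,2,0,0] ![1,0,1,1,0], glue ![1,0,2,0] ![1,0,1,1,0], glue ![1,1,0,2] ![1,0,1,1,0], glue ![1,2,1,1] ![1,0,1,1,0], glue ![2,0,0,1] ![1,0,1,1,0], glue ![2,1,1,0] ![1,0,1,1,0], glue ![2,2,2,2] ![1,0,1,1,0], glue ![0,0,2,0] ![1,1,0,0,1], glue ![0,1,0,2] ![1,1,0,0,1], glue ![0,2,1,1] ![1,1,0,0,1], glue ![1,0,0,1] ![1,1,0,0,1], glue ![1,1,1,0] ![1,1,0,0,1], glue ![1,2,2,2] ![1,1,0,0,1], glue ![2,0,1,2] ![1,1,0,0,1], glue ![2,1,2,1] ![1,1,0,0,1], glue ![2,2,0,0] ![1,1,0,0,1], glue ![0,0,2,1] ![1,1,1,0,0], glue ![0,1,0,0] ![1,1,1,0,0], glue ![0,2,1,2] ![1,1,1,0,0], glue ![1,0,0,2] ![1,1,1,0,0], glue ![1,1,1,1] ![1,1,1,0,0], glue ![1,2,2,0] ![1,1,1,0,0],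 glue ![2,0,1,0] ![1,1,1,0,0], glue ![2,1,2,2] ![1,1,1,0,0], glue ![2,2,0,1] ![1,1,1,0,0]]

def C3list : List (Cfg (fun _ : Fin 4 => 3)) := [![0,0,0,0], ![0,1,1,2], ![0,2,2,1], ![1,0,1,1], ![1,1,2,0], ![1,2,0,2], ![2,0,2,2], ![2,1,0,1], ![2,2,1,0]]

def B6list : List (Cfg (fun _ : Fin 6 => 2)) := [![0,0,0,0,0,0], ![1,0,1,0,1,0], ![0,1,1,0,0,1], ![1,1,0,0,1,1], ![0,0,0,1,1,1], ![1,0,1,1,0,1], ![0,1,1,1,1,0], ![1,1,0,1,0,0]]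

def B7list : List (Cfg (fun _ : Fin 7 => 2)) := [![0,0,0,0,0,0,0], ![1,0,1,0,1,0,1], ![0,1,1,0,0,1,1], ![1,1,0,0,1,1,0], ![0,0,0,1,1,1,1], ![1,0,1,1,0,1,0], ![0,1,1,1,1,0,0], ![1,1,0,1,0,0,1]]

def B8list : List (Cfg (fun _ : Fin 8 => 2)) := [![0,0,0,0,0,0,0,0], ![0,1,0,1,0,1,0,1], ![0,0,1,1,0,0,1,1], ![0,1,1,0,0,1,1,0], ![0,0,0,0,1,1,1,1], ![0,1,0,1,1,0,1,0], ![0,0,1,1,1,1,0,0], ![0,1,1,0,1,0,0,1], ![1,1,1,1,1,1,1,1], ![1,0,1,0,1,0,1,0], ![1,1,0,0,1,1,0,0], ![1,0,0,1,1,0,0,1], ![1,1,1,1,0,0,0,0], ![1,0,1,0,0,1,0,1], ![1,1,0,0,0,0,1,1], ![1,0,0,1,0,1,1,0]]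

def B9list : List (Cfg (fun _ : Fin 9 => 2)) := [![0,0,0,0,0,0,0,0,0], ![1,0,1,0,1,0,1,0,1], ![1,0,0,1,1,0,0,1,1], ![0,0,1,1,0,0,1,1,0], ![1,0,0,0,0,1,1,1,1], ![0,0,1,0,1,1,0,1,0], ![0,0,0,1,1,1,1,0,0], ![1,0,1,1,0,1,0,0,1], ![0,1,1,1,1,1,1,1,1], ![1,1,0,1,0,1,0,1,0], ![1,1,1,0,0,1,1,0,0], ![0,1,0,0,1,1,0,0,1], ![1,1,1,1,1,0,0,0,0], ![0,1,0,1,0,0,1,0,1], ![0,1,1,0,0,0,0,1,1], ![1,1,0,0,1,0,1,1,0]]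

def B10list : List (Cfg (fun _ : Fin 10 => 2)) := [![0,0,0,0,0,0,0,0,0,0], ![0,1,0,1,0,1,0,1,0,1], ![1,1,0,0,1,1,0,0,1,1], ![1,0,0,1,1,0,0,1,1,0], ![1,1,0,0,0,0,1,1,1,1], ![1,0,0,1,0,1,1,0,1,0], ![0,0,0,0,1,1,1,1,0,0], ![0,1,0,1,1,0,1,0,0,1], ![0,0,1,1,1,1,1,1,1,1], ![0,1,1,0,1,0,1,0,1,0], ![1,1,1,1,0,0,1,1,0,0], ![1,0,1,0,0,1,1,0,0,1], ![1,1,1,1,1,1,0,0,0,0], ![1,0,1,0,1,0,0,1,0,1], ![0,0,1,1,0,0,0,0,1,1], ![0,1,1,0,0,1,0,1,1,0]]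

def B11list : List (Cfg (fun _ : Fin 11 => 2)) := [![0,0,0,0,0,0,0,0,0,0,0], ![1,0,1,0,1,0,1,0,1,0,1], ![0,1,1,0,0,1,1,0,0,1,1], ![1,1,0,0,1,1,0,0,1,1,0], ![1,1,1,0,0,0,0,1,1,1,1], ![0,1,0,0,1,0,1,1,0,1,0], ![1,0,0,0,0,1,1,1,1,0,0], ![0,0,1,0,1,1,0,1,0,0,1], ![0,0,0,1,1,1,1,1,1,1,1], ![1,0,1,1,0,1,0,1,0,1,0], ![0,1,1,1,1,0,0,1,1,0,0], ![1,1,0,1,0,0,1,1,0,0,1], ![1,1,1,1,1,1,1,0,0,0,0], ![0,1,0,1,0,1,0,0,1,0,1], ![1,0,0,1,1,0,0,0,0,1,1], ![0,0,1,1,0,0,1,0,1,1,0]]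


def C3 : Finset (Cfg (fun _ : Fin 4 => 3)) := C3list.toFinset
def M4 : Finset (Cfg (Sum.elim (fun _ : Fin 4 => 3) (fun _ : Fin 4 => 2))) := M4list.toFinset
def M5 : Finset (Cfg (Sum.elim (fun _ : Fin 4 => 3) (fun _ : Fin 5 => 2))) := M5list.toFinset
def B6 : Finset (Cfg (fun _ : Fin 6 => 2)) := B6list.toFinset
def B7 : Finset (Cfg (fun _ : Fin 7 => 2)) := B7list.toFinset
def B8 : Finset (Cfg (fun _ : Fin 8 => 2)) := B8list.toFinset
def B9 : Finset (Cfg (fun _ : Fin 9 => 2)) := B9list.toFinset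
def B10 : Finset (Cfg (fun _ : Fin 10 => 2)) := B10list.toFinset
def B11 : Finset (Cfg (fun _ : Fin 11 => 2)) := B11list.toFinset

set_option maxRecDepth 400000 in
set_option maxHeartbeats 2000000 in
theorem C3good : GoodCode (fun _ : Fin 4 => 3) C3 :=
  goodCode_of_list _ _ (by decide) (by decide) (by decide) (by decide)

set_option maxRecDepth 400000 in
set_option maxHeartbeats 8000000 in
theorem M4good : GoodCode (Sum.elim (fun _ : Fin 4 => 3) (fun _ : Fin 4 => 2)) M4 :=
  goodCode_of_list _ _ (by decide) (by decide) (by decide) (by decide)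

set_option maxRecDepth 400000 in
set_option maxHeartbeats 8000000 in
theorem M5good : GoodCode (Sum.elim (fun _ : Fin 4 => 3) (fun _ : Fin 5 => 2)) M5 :=
  goodCode_of_list _ _ (by decide) (by decide) (by decide) (by decide)

set_option maxRecDepth 400000 in
set_option maxHeartbeats 4000000 in
theorem B6good : GoodCode (fun _ : Fin 6 => 2) B6 :=
  goodCode_of_list _ _ (by decide) (by decide) (by decide) (by decide)

set_option maxRecDepth 400000 in
set_option maxHeartbeats 4000000 in
theorem B7good : GoodCode (fun _ : Fin 7 => 2) B7 :=
  goodCode_of_list _ _ (by decide) (by decide) (by decide) (by decide)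

set_option maxRecDepth 400000 in
set_option maxHeartbeats 4000000 in
theorem B8good : GoodCode (fun _ : Fin 8 => 2) B8 :=
  goodCode_of_list _ _ (by decide) (by decide) (by decide) (by decide)

set_option maxRecDepth 400000 in
set_option maxHeartbeats 4000000 in
theorem B9good : GoodCode (fun _ : Fin 9 => 2) B9 :=
  goodCode_of_list _ _ (by decide) (by decide) (by decide) (by decide)

set_option maxRecDepth 400000 in
set_option maxHeartbeats 4000000 in
theorem B10good : GoodCode (fun _ : Fin 10 => 2) B10 :=
  goodCode_of_list _ _ (by decide) (by decide) (by decide) (by decide)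

set_option maxRecDepth 400000 in
set_option maxHeartbeats 4000000 in
theorem B11good : GoodCode (fun _ : Fin 11 => 2) B11 :=
  goodCode_of_list _ _ (by decide) (by decide) (by decide) (by decide)

/-- Good binary codes of any length `l ≥ 6`. -/
theorem binGood : ∀ l, 6 ≤ l →
    ∃ C : Finset (Cfg (fun _ : Fin l => 2)), GoodCode (fun _ : Fin l => 2) C := by
  intro l
  induction l using Nat.strong_induction_on with
  | _ l ih =>
    intro hl
    by_cases h11 : l ≤ 11
    · interval_cases l
      · exact ⟨B6, B6good⟩
      · exact ⟨B7, B7good⟩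
      · exact ⟨B8, B8good⟩
      · exact ⟨B9, B9good⟩
      · exact ⟨B10, B10good⟩
      · exact ⟨B11, B11good⟩
    · obtain ⟨C', hC'⟩ := ih (l - 6) (by omega) (by omega)
      have hprod := goodCode_prodCode B6good hC'
      have e : Fin 6 ⊕ Fin (l - 6) ≃ Fin l :=
        finSumFinEquiv.trans (finCongr (by omega))
      have hcomp : ∀ j : Fin l,
          Sum.elim (fun _ : Fin 6 => 2) (fun _ : Fin (l - 6) => 2) (e.symm j)
            = (fun _ : Fin l => 2) j := by
        intro j
        cases e.symm j <;> rfl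
      exact ⟨relabelCode e _ _ hcomp _, goodCode_relabel e _ _ hcomp hprod⟩

set_option maxRecDepth 4000 in
theorem dim8compat : ∀ j : Fin 8,
    Sum.elim (fun _ : Fin 4 => 3) (fun _ : Fin 4 => 2) (finSumFinEquiv.symm j)
      = (![3, 3, 3, 3, 2, 2, 2, 2] : Fin 8 → ℕ) j := by decide

end RUnif

open RUnif in
/-- There exists a 2-uniform unit vector in `(ℂ³)^{⊗4} ⊗ (ℂ²)^{⊗4}`;
more generally, for every `N ≥ 4` there exists a 2-uniform unit vector in
`(ℂ³)^{⊗4} ⊗ (ℂ²)^{⊗N}`. -/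
theorem statement17 :
    (∃ ψ : H ![3, 3, 3, 3, 2, 2, 2, 2],
      IsUnitVec ![3, 3, 3, 3, 2, 2, 2, 2] ψ ∧
      IsUniform ![3, 3, 3, 3, 2, 2, 2, 2] 2 ψ) ∧
    (∀ N : ℕ, 4 ≤ N →
      ∃ ψ : H (Sum.elim (fun _ : Fin 4 => 3) (fun _ : Fin N => 2)),
        IsUnitVec (Sum.elim (fun _ : Fin 4 => 3) (fun _ : Fin N => 2)) ψ ∧
        IsUniform (Sum.elim (fun _ : Fin 4 => 3) (fun _ : Fin N => 2)) 2 ψ) := by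
  constructor
  · exact exists_uniform_of_goodCode
      (goodCode_relabel finSumFinEquiv
        (Sum.elim (fun _ : Fin 4 => 3) (fun _ : Fin 4 => 2))
        ![3, 3, 3, 3, 2, 2, 2, 2] dim8compat M4good)
  · intro N hN
    rcases eq_or_lt_of_le hN with h4 | h4
    · subst h4
      exact exists_uniform_of_goodCode M4good
    · rcases eq_or_lt_of_le (Nat.succ_le_of_lt h4) with h5 | h5
      · rw [← h5]
        exact exists_uniform_of_goodCode M5good
      · obtain ⟨B, hB⟩ := binGood N (by omega)
        exact exists_uniform_of_goodCode (goodCode_prodCode C3good hB)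
end
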